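/- arXiv:2303.10206 — 7 statements merged into one kernel-verified Lean document; each statement's English description precedes it below -/
import Mathlib

section
/- Let {T_m} be a sequence of Lipschitz maps on a complete metric space (X,d) with Lipschitz constants δ_m. If there exists x* ∈ X such that the sequence {d(x*, T_m(x*))} is bounded and the series Σ_{m=1}^∞ Π_{i=1}^m δ_i converges, then for every x ∈ X the backward trajectory ψ_m(x) = T_1 ∘ T_2 ∘ ⋯ ∘ T_m(x) converges to a unique limit x̄ independent of x. -/
open Filter

/-- Backward trajectory `ψ m = T 0 ∘ T 1 ∘ ⋯ ∘ T m` of a sequence of maps. -/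
def backward {X : Type*} (T : ℕ → X → X) : ℕ → X → X
  | 0, x => T 0 x
  | (m + 1), x => backward T m (T (m + 1) x)

lemma backward_lipschitz {X : Type*} [MetricSpace X] (T : ℕ → X → X) (δ : ℕ → NNReal)
    (hLip : ∀ m, LipschitzWith (δ m) (T m)) (m : ℕ) :
    LipschitzWith (∏ i ∈ Finset.range (m + 1), δ i) (backward T m) := by
  induction m with
  | zero => simpa [show backward T 0 = T 0 from funext fun _ => rfl] using hLip 0
  | succ n ih =>
      have : LipschitzWith ((∏ i ∈ Finset.range (n + 1), δ i) * δ (n + 1))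
          (backward T n ∘ T (n + 1)) := ih.comp (hLip (n + 1))
      rw [Finset.prod_range_succ]
      exact fun x y => this x y

theorem stmt_1 {X : Type*} [MetricSpace X] [CompleteSpace X]
    (T : ℕ → X → X) (δ : ℕ → NNReal)
    (hLip : ∀ m, LipschitzWith (δ m) (T m))
    (xs : X) (hbdd : ∃ C : ℝ, ∀ m, dist xs (T m xs) ≤ C)
    (hsum : Summable fun m => ∏ i ∈ Finset.range (m + 1), (δ i : ℝ)) :
    ∃ xbar : X, ∀ x : X,
      Tendsto (fun m => backward T m x) atTop (nhds xbar) := by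
  obtain ⟨C, hC⟩ := hbdd
  set P : ℕ → ℝ := fun m => ∏ i ∈ Finset.range (m + 1), (δ i : ℝ) with hP
  have hPlip : ∀ m (a b : X), dist (backward T m a) (backward T m b) ≤ P m * dist a b := by
    intro m a b
    have := (backward_lipschitz T δ hLip m).dist_le_mul a b
    simpa [hP, NNReal.coe_prod] using this
  -- Cauchy at xs
  have hcauchy : CauchySeq (fun m => backward T m xs) := by
    apply cauchySeq_of_dist_le_of_summable (fun m => P m * C)
    · intro n
      have : dist (backward T n xs) (backward T (n + 1) xs)
          = dist (backward T n xs) (backward T n (T (n + 1) xs)) := rfl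
      rw [this]
      calc dist (backward T n xs) (backward T n (T (n + 1) xs))
          ≤ P n * dist xs (T (n + 1) xs) := hPlip n _ _
        _ ≤ P n * C := by
            apply mul_le_mul_of_nonneg_left (hC (n + 1))
            exact Finset.prod_nonneg fun i _ => (δ i).coe_nonneg
    · exact hsum.mul_right C
  obtain ⟨xbar, hxbar⟩ := cauchySeq_tendsto_of_complete hcauchy
  refine ⟨xbar, fun x => ?_⟩
  have hP0 : Tendsto P atTop (nhds 0) := hsum.tendsto_atTop_zero
  have hdist : Tendsto (fun m => dist (backward T m xs) (backward T m x)) atTop (nhds 0) := by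
    have hub : ∀ m, dist (backward T m xs) (backward T m x) ≤ P m * dist xs x :=
      fun m => hPlip m xs x
    have hlb : ∀ m, (0:ℝ) ≤ dist (backward T m xs) (backward T m x) := fun m => dist_nonneg
    have : Tendsto (fun m => P m * dist xs x) atTop (nhds 0) := by
      simpa using hP0.mul_const (dist xs x)
    exact squeeze_zero hlb hub this
  exact hxbar.congr_dist hdist
end

section
/- Let f ∈ C(I) with I = [a,b], let {L_m} be a sequence of bounded linear operators on C(I) with C_L := sup_m ‖Id − L_m‖ < ∞, and let α = {α_m} be a sequence of continuous scaling function vectors with ‖α‖_∞ := sup_m max_i ‖α_{i,m}‖_∞ < 1. Then the non-stationary fractal function f_b^α (the limit of backward trajectories of the RB operators T^{α_m} with b_m = L_m f) satisfies ‖f_b^α − f‖_∞ ≤ (‖α‖_∞/(1−‖α‖_∞)) · sup_m ‖f − L_m f‖_∞ ≤ (‖α‖_∞/(1−‖α‖_∞)) · C_L · ‖f‖_∞. -/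
open Filter

/-- Perturbation error of the non-stationary α-fractal function `f_b^α` with `b_m = L_m f`. -/
theorem stmt_4
    {a b : ℝ} (hab : a < b) {N : ℕ} (hN : 0 < N)
    (x : Fin (N + 1) → ℝ) (hxmono : StrictMono x)
    (hx0 : x 0 = a) (hxN : x (Fin.last N) = b)
    -- inverses Q i of the affine contractions l i mapping I onto I_i
    (Q : Fin N → Set.Icc a b → Set.Icc a b)
    (hQ : ∀ (i : Fin N) (t : Set.Icc a b),
      (Q i t : ℝ) = a + (b - a) * ((t : ℝ) - x i.castSucc) / (x i.succ - x i.castSucc))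
    -- the bounded linear operators L m, fixing endpoint values
    (L : ℕ → C(Set.Icc a b, ℝ) →L[ℝ] C(Set.Icc a b, ℝ))
    (hLfix : ∀ (m : ℕ) (g : C(Set.Icc a b, ℝ)),
      L m g ⟨a, Set.left_mem_Icc.mpr hab.le⟩ = g ⟨a, Set.left_mem_Icc.mpr hab.le⟩ ∧
      L m g ⟨b, Set.right_mem_Icc.mpr hab.le⟩ = g ⟨b, Set.right_mem_Icc.mpr hab.le⟩)
    (CL : ℝ)
    (hCLbdd : BddAbove (Set.range fun m =>
      ‖ContinuousLinearMap.id ℝ C(Set.Icc a b, ℝ) - L m‖))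
    (hCL : CL = ⨆ m, ‖ContinuousLinearMap.id ℝ C(Set.Icc a b, ℝ) - L m‖)
    -- the scaling functions α_{i,m} with ‖α‖_∞ < 1
    (α : ℕ → Fin N → C(Set.Icc a b, ℝ)) (A : ℝ)
    (hαbdd : BddAbove (Set.range fun p : ℕ × Fin N => ‖α p.1 p.2‖))
    (hA : A = ⨆ p : ℕ × Fin N, ‖α p.1 p.2‖) (hA1 : A < 1)
    (f : C(Set.Icc a b, ℝ))
    -- the RB operators T^{α_m} with b_m = L_m f
    (T : ℕ → C(Set.Icc a b, ℝ) → C(Set.Icc a b, ℝ))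
    (hT : ∀ (m : ℕ) (g : C(Set.Icc a b, ℝ)) (i : Fin N) (t : Set.Icc a b),
      x i.castSucc ≤ (t : ℝ) → (t : ℝ) ≤ x i.succ →
      T m g t = f t + α m i (Q i t) * (g (Q i t) - L m f (Q i t)))
    -- f_b^α as limit of the backward trajectories, from any initial h ∈ C_f(I)
    (fb : C(Set.Icc a b, ℝ))
    (hfb : ∀ h : C(Set.Icc a b, ℝ),
      h ⟨a, Set.left_mem_Icc.mpr hab.le⟩ = f ⟨a, Set.left_mem_Icc.mpr hab.le⟩ →
      h ⟨b, Set.right_mem_Icc.mpr hab.le⟩ = f ⟨b, Set.right_mem_Icc.mpr hab.le⟩ →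
      Tendsto (fun m => backward T m h) atTop (nhds fb)) :
    ‖fb - f‖ ≤ A / (1 - A) * (⨆ m, ‖f - L m f‖) ∧
      A / (1 - A) * (⨆ m, ‖f - L m f‖) ≤ A / (1 - A) * CL * ‖f‖ := by

  classical
  -- basic positivity facts
  have hA0 : 0 ≤ A := by
    have := le_ciSup hαbdd ((0 : ℕ), (⟨0, hN⟩ : Fin N))
    rw [← hA] at this
    exact le_trans (norm_nonneg _) this
  have h1A : 0 < 1 - A := by linarith
  -- covering the interval by the subintervals
  have hcover : ∀ t : ℝ, a ≤ t → t ≤ b →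
      ∃ i : Fin N, x i.castSucc ≤ t ∧ t ≤ x i.succ := by
    intro t ht1 ht2
    set Sf := Finset.univ.filter (fun j : Fin (N+1) => x j ≤ t) with hSf
    have h0 : (0 : Fin (N+1)) ∈ Sf := by
      simp only [hSf, Finset.mem_filter, Finset.mem_univ, true_and, hx0]
      exact ht1
    have hne : Sf.Nonempty := ⟨0, h0⟩
    set j := Sf.max' hne with hj
    have hjmem : j ∈ Sf := Sf.max'_mem hne
    have hjle : x j ≤ t := by
      simpa [hSf] using hjmem
    by_cases hjN : (j : ℕ) < N
    · refine ⟨⟨(j : ℕ), hjN⟩, ?_, ?_⟩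
      · have hcast : (Fin.castSucc ⟨(j : ℕ), hjN⟩ : Fin (N+1)) = j := by
          ext; simp
        rw [hcast]; exact hjle
      · by_contra hlt
        push_neg at hlt
        have hmem : (Fin.succ (⟨(j : ℕ), hjN⟩ : Fin N) : Fin (N+1)) ∈ Sf := by
          simp only [hSf, Finset.mem_filter, Finset.mem_univ, true_and]
          exact hlt.le
        have hle := Sf.le_max' _ hmem
        rw [← hj] at hle
        have : (j : ℕ) + 1 ≤ (j : ℕ) := by
          simpa [Fin.le_def, Fin.val_succ] using hle
        omega
    · have hjval : (j : ℕ) = N := by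
        have := j.isLt; omega
      refine ⟨⟨N - 1, by omega⟩, ?_, ?_⟩
      · have hle : (Fin.castSucc (⟨N - 1, by omega⟩ : Fin N) : Fin (N+1)) ≤ j := by
          simp only [Fin.le_def, Fin.coe_castSucc, hjval]; omega
        exact le_trans (hxmono.monotone hle) hjle
      · have hsucc : (Fin.succ (⟨N - 1, by omega⟩ : Fin N) : Fin (N+1)) = Fin.last N := by
          ext; simp [Fin.val_succ]; omega
        rw [hsucc, hxN]; exact ht2
  -- bound on ‖f - L m f‖
  have hCLle : ∀ m : ℕ, ‖f - L m f‖ ≤ CL * ‖f‖ := by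
    intro m
    have h1 : f - L m f = (ContinuousLinearMap.id ℝ C(Set.Icc a b, ℝ) - L m) f := by
      simp [ContinuousLinearMap.sub_apply]
    have h2 : ‖(ContinuousLinearMap.id ℝ C(Set.Icc a b, ℝ) - L m) f‖ ≤
        ‖ContinuousLinearMap.id ℝ C(Set.Icc a b, ℝ) - L m‖ * ‖f‖ :=
      (ContinuousLinearMap.id ℝ C(Set.Icc a b, ℝ) - L m).le_opNorm f
    have h3 : ‖ContinuousLinearMap.id ℝ C(Set.Icc a b, ℝ) - L m‖ ≤ CL := by
      rw [hCL]; exact le_ciSup hCLbdd m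
    rw [h1]
    exact h2.trans (mul_le_mul_of_nonneg_right h3 (norm_nonneg _))
  have hCL0 : 0 ≤ CL * ‖f‖ := le_trans (norm_nonneg _) (hCLle 0)
  have hS_bdd : BddAbove (Set.range fun m => ‖f - L m f‖) := by
    refine ⟨CL * ‖f‖, ?_⟩
    rintro _ ⟨m, rfl⟩
    exact hCLle m
  set S := ⨆ m, ‖f - L m f‖ with hSdef
  have hS0 : 0 ≤ S := le_trans (norm_nonneg _) (le_ciSup hS_bdd 0)
  have hSCL : S ≤ CL * ‖f‖ := ciSup_le hCLle
  set B := A * S / (1 - A) with hBdef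
  have hB0 : 0 ≤ B := by positivity
  -- main contraction estimate
  have hTbound : ∀ (m : ℕ) (g : C(Set.Icc a b, ℝ)), ‖g - f‖ ≤ B → ‖T m g - f‖ ≤ B := by
    intro m g hg
    have hSm : ‖f - L m f‖ ≤ S := le_ciSup hS_bdd m
    have h1 : ‖T m g - f‖ ≤ A * (‖g - f‖ + ‖f - L m f‖) := by
      rw [ContinuousMap.norm_le _ (by positivity)]
      intro t
      obtain ⟨i, hi1, hi2⟩ := hcover (t : ℝ) t.2.1 t.2.2
      have hTv := hT m g i t hi1 hi2
      have heq : (T m g - f) t = α m i (Q i t) * (g (Q i t) - L m f (Q i t)) := by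
        simp only [ContinuousMap.sub_apply, hTv]; ring
      rw [heq, norm_mul]
      have hα : ‖α m i (Q i t)‖ ≤ A := by
        refine le_trans ((α m i).norm_coe_le_norm _) ?_
        rw [hA]; exact le_ciSup hαbdd (m, i)
      have hgl : ‖g (Q i t) - L m f (Q i t)‖ ≤ ‖g - f‖ + ‖f - L m f‖ := by
        have h2 : g (Q i t) - L m f (Q i t) = (g - f) (Q i t) + (f - L m f) (Q i t) := by
          simp only [ContinuousMap.sub_apply]; ring
        rw [h2]
        exact le_trans (norm_add_le _ _)
          (add_le_add ((g - f).norm_coe_le_norm _) ((f - L m f).norm_coe_le_norm _))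
      exact mul_le_mul hα hgl (norm_nonneg _) hA0
    have h4 : A * (‖g - f‖ + ‖f - L m f‖) ≤ A * (B + S) :=
      mul_le_mul_of_nonneg_left (add_le_add hg hSm) hA0
    have h5 : A * (B + S) = B := by
      have hne : (1 : ℝ) - A ≠ 0 := ne_of_gt h1A
      rw [hBdef]
      field_simp
      ring_nf
    linarith
  -- iterate along backward trajectories
  have hback : ∀ (m : ℕ) (g : C(Set.Icc a b, ℝ)), ‖g - f‖ ≤ B →
      ‖backward T m g - f‖ ≤ B := by
    intro m
    induction m with
    | zero => intro g hg; exact hTbound 0 g hg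
    | succ m ih => intro g hg; exact ih _ (hTbound (m + 1) g hg)
  -- pass to the limit
  have htend : Tendsto (fun m => ‖backward T m f - f‖) atTop (nhds ‖fb - f‖) :=
    ((hfb f rfl rfl).sub tendsto_const_nhds).norm
  have hmain : ‖fb - f‖ ≤ B := by
    refine le_of_tendsto htend (Eventually.of_forall fun m => hback m f ?_)
    simpa using hB0
  have hB : B = A / (1 - A) * S := by rw [hBdef]; ring
  constructor
  · rw [← hB]; exact hmain
  · rw [mul_assoc]
    exact mul_le_mul_of_nonneg_left hSCL (by positivity)
end

section
/- Under the setup of the non-stationary α-fractal operator F_b^α : C(I) → C(I), F_b^α(f) = f_b^α with b_m = L_m f for linear bounded operators L_m, the operator F_b^α is linear and bounded, with ‖F_b^α‖ ≤ 1 + (‖α‖_∞/(1−‖α‖_∞))·C_L, where C_L = sup_m ‖Id − L_m‖. -/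
open Filter

theorem stmt_5
    {a b : ℝ} (hab : a < b) {N : ℕ} (hN : 0 < N)
    (x : Fin (N + 1) → ℝ) (hxmono : StrictMono x)
    (hx0 : x 0 = a) (hxN : x (Fin.last N) = b)
    -- inverses Q i of the affine contractions l i mapping I onto I_i
    (Q : Fin N → Set.Icc a b → Set.Icc a b)
    (hQ : ∀ (i : Fin N) (t : Set.Icc a b),
      (Q i t : ℝ) = a + (b - a) * ((t : ℝ) - x i.castSucc) / (x i.succ - x i.castSucc))
    -- the bounded linear operators L m, fixing endpoint values
    (L : ℕ → C(Set.Icc a b, ℝ) →L[ℝ] C(Set.Icc a b, ℝ))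
    (hLfix : ∀ (m : ℕ) (g : C(Set.Icc a b, ℝ)),
      L m g ⟨a, Set.left_mem_Icc.mpr hab.le⟩ = g ⟨a, Set.left_mem_Icc.mpr hab.le⟩ ∧
      L m g ⟨b, Set.right_mem_Icc.mpr hab.le⟩ = g ⟨b, Set.right_mem_Icc.mpr hab.le⟩)
    (CL : ℝ)
    (hCLbdd : BddAbove (Set.range fun m =>
      ‖ContinuousLinearMap.id ℝ C(Set.Icc a b, ℝ) - L m‖))
    (hCL : CL = ⨆ m, ‖ContinuousLinearMap.id ℝ C(Set.Icc a b, ℝ) - L m‖)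
    -- the scaling functions α_{i,m} with ‖α‖_∞ < 1
    (α : ℕ → Fin N → C(Set.Icc a b, ℝ)) (A : ℝ)
    (hαbdd : BddAbove (Set.range fun p : ℕ × Fin N => ‖α p.1 p.2‖))
    (hA : A = ⨆ p : ℕ × Fin N, ‖α p.1 p.2‖) (hA1 : A < 1)
    -- for each seed f, the RB operators T^{α_m} with b_m = L_m f
    (T : C(Set.Icc a b, ℝ) → ℕ → C(Set.Icc a b, ℝ) → C(Set.Icc a b, ℝ))
    (hT : ∀ (f : C(Set.Icc a b, ℝ)) (m : ℕ) (g : C(Set.Icc a b, ℝ)) (i : Fin N)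
        (t : Set.Icc a b), x i.castSucc ≤ (t : ℝ) → (t : ℝ) ≤ x i.succ →
      T f m g t = f t + α m i (Q i t) * (g (Q i t) - L m f (Q i t)))
    -- the α-fractal operator F = F_b^α, sending f to the limit of backward trajectories
    (F : C(Set.Icc a b, ℝ) → C(Set.Icc a b, ℝ))
    (hF : ∀ f : C(Set.Icc a b, ℝ),
      Tendsto (fun m => backward (T f) m f) atTop (nhds (F f))) :
    IsLinearMap ℝ F ∧ ∀ f : C(Set.Icc a b, ℝ),
      ‖F f‖ ≤ (1 + A / (1 - A) * CL) * ‖f‖ := by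

  classical
  haveI : Nonempty (Set.Icc a b) := ⟨⟨a, Set.left_mem_Icc.mpr hab.le⟩⟩
  -- basic facts about A and CL
  have hAle : ∀ (m : ℕ) (i : Fin N), ‖α m i‖ ≤ A := by
    intro m i; rw [hA]; exact le_ciSup hαbdd (m, i)
  have hA0 : 0 ≤ A := le_trans (norm_nonneg _) (hAle 0 ⟨0, hN⟩)
  have h1A : (0:ℝ) < 1 - A := by linarith
  have hCLle : ∀ m : ℕ, ‖ContinuousLinearMap.id ℝ C(Set.Icc a b, ℝ) - L m‖ ≤ CL := by
    intro m; rw [hCL]; exact le_ciSup hCLbdd m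
  have hCL0 : 0 ≤ CL := le_trans (norm_nonneg (ContinuousLinearMap.id ℝ C(Set.Icc a b, ℝ) - L 0)) (hCLle 0)
  -- covering lemma: every point lies in some subinterval
  have hcover : ∀ t : Set.Icc a b, ∃ i : Fin N,
      x i.castSucc ≤ (t : ℝ) ∧ (t : ℝ) ≤ x i.succ := by
    intro t
    obtain ⟨ht1, ht2⟩ := t.2
    by_cases hb : x (Fin.last N) ≤ (t : ℝ)
    · refine ⟨⟨N - 1, by omega⟩, le_trans (hxmono.monotone (Fin.le_last _)) hb, ?_⟩
      have hs : (⟨N - 1, by omega⟩ : Fin N).succ = Fin.last N := by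
        ext; simp [Fin.succ, Fin.last]; omega
      rw [hs, hxN]; exact ht2
    · set P : ℕ → Prop := fun k => ∃ h : k < N + 1, x ⟨k, h⟩ ≤ (t : ℝ) with hPdef
      have hP0 : P 0 := ⟨Nat.succ_pos N, by
        have : (⟨0, Nat.succ_pos N⟩ : Fin (N+1)) = 0 := rfl
        rw [this, hx0]; exact ht1⟩
      set j := Nat.findGreatest P N with hj
      have hPj : P j := Nat.findGreatest_spec (Nat.zero_le N) hP0
      have hjN : j ≤ N := Nat.findGreatest_le N
      have hjlt : j < N := by
        rcases lt_or_eq_of_le hjN with h | h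
        · exact h
        · exfalso; apply hb
          obtain ⟨hh, hx⟩ := hPj
          have : (⟨j, hh⟩ : Fin (N+1)) = Fin.last N := by ext; simp [Fin.last, h]
          rwa [this] at hx
      refine ⟨⟨j, hjlt⟩, ?_, ?_⟩
      · obtain ⟨hh, hx⟩ := hPj
        have : (Fin.castSucc ⟨j, hjlt⟩ : Fin (N+1)) = ⟨j, hh⟩ := rfl
        rwa [this]
      · have hnot : ¬ P (j + 1) :=
          Nat.findGreatest_is_greatest (Nat.lt_succ_self j) (by omega)
        have : ¬ x ⟨j + 1, by omega⟩ ≤ (t : ℝ) := fun h => hnot ⟨by omega, h⟩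
        have hs : (Fin.succ (⟨j, hjlt⟩ : Fin N) : Fin (N+1)) = ⟨j + 1, by omega⟩ := rfl
        rw [hs]; linarith [lt_of_not_ge this]
  -- step estimate : ‖T f m g - f‖ ≤ A * ‖g - f‖ + A * (CL * ‖f‖)
  have hIdL : ∀ (m : ℕ) (f : C(Set.Icc a b, ℝ)), ‖f - L m f‖ ≤ CL * ‖f‖ := by
    intro m f
    have h1 : f - L m f = (ContinuousLinearMap.id ℝ C(Set.Icc a b, ℝ) - L m) f := by
      simp
    rw [h1]
    calc ‖(ContinuousLinearMap.id ℝ C(Set.Icc a b, ℝ) - L m) f‖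
        ≤ ‖ContinuousLinearMap.id ℝ C(Set.Icc a b, ℝ) - L m‖ * ‖f‖ :=
          ContinuousLinearMap.le_opNorm _ _
      _ ≤ CL * ‖f‖ := by
          exact mul_le_mul_of_nonneg_right (hCLle m) (norm_nonneg f)
  have hstep0 : ∀ (f : C(Set.Icc a b, ℝ)) (m : ℕ) (g : C(Set.Icc a b, ℝ)),
      ‖T f m g - f‖ ≤ A * ‖g - L m f‖ := by
    intro f m g
    rw [ContinuousMap.norm_le _ (mul_nonneg hA0 (norm_nonneg _))]
    intro t
    obtain ⟨i, h1, h2⟩ := hcover t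
    rw [ContinuousMap.sub_apply, hT f m g i t h1 h2]
    have hval : ‖(g - L m f) (Q i t)‖ ≤ ‖g - L m f‖ :=
      ContinuousMap.norm_coe_le_norm _ _
    rw [ContinuousMap.sub_apply] at hval
    simp only [add_sub_cancel_left, norm_mul]
    have hα : ‖α m i (Q i t)‖ ≤ A :=
      le_trans (ContinuousMap.norm_coe_le_norm _ _) (hAle m i)
    exact mul_le_mul hα hval (norm_nonneg _) hA0
  have hstep : ∀ (f : C(Set.Icc a b, ℝ)) (m : ℕ) (g : C(Set.Icc a b, ℝ)),
      ‖T f m g - f‖ ≤ A * ‖g - f‖ + A * (CL * ‖f‖) := by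
    intro f m g
    have h1 := hstep0 f m g
    have h2 : ‖g - L m f‖ ≤ ‖g - f‖ + CL * ‖f‖ := by
      calc ‖g - L m f‖ = ‖(g - f) + (f - L m f)‖ := by ring_nf
        _ ≤ ‖g - f‖ + ‖f - L m f‖ := norm_add_le _ _
        _ ≤ ‖g - f‖ + CL * ‖f‖ := by linarith [hIdL m f]
    nlinarith [norm_nonneg (g - f)]
  -- main norm induction
  have hBbound : ∀ (f : C(Set.Icc a b, ℝ)) (m : ℕ) (g : C(Set.Icc a b, ℝ)),
      ‖backward (T f) m g - f‖ ≤
        A ^ (m + 1) * ‖g - f‖ + A / (1 - A) * (1 - A ^ (m + 1)) * (CL * ‖f‖) := by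
    intro f m
    induction m with
    | zero =>
        intro g
        have := hstep f 0 g
        have heq : A / (1 - A) * (1 - A) = A := by
          field_simp
        simpa [backward, heq] using this
    | succ m ih =>
        intro g
        have h1 : backward (T f) (m + 1) g = backward (T f) m (T f (m + 1) g) := rfl
        rw [h1]
        calc ‖backward (T f) m (T f (m + 1) g) - f‖
            ≤ A ^ (m + 1) * ‖T f (m + 1) g - f‖ +
              A / (1 - A) * (1 - A ^ (m + 1)) * (CL * ‖f‖) := ih _
          _ ≤ A ^ (m + 1) * (A * ‖g - f‖ + A * (CL * ‖f‖)) +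
              A / (1 - A) * (1 - A ^ (m + 1)) * (CL * ‖f‖) := by
              have := hstep f (m + 1) g
              nlinarith [pow_nonneg hA0 (m + 1)]
          _ = A ^ (m + 1 + 1) * ‖g - f‖ +
              A / (1 - A) * (1 - A ^ (m + 1 + 1)) * (CL * ‖f‖) := by
              field_simp
              ring
  -- the limit bound
  have hnear : ∀ f : C(Set.Icc a b, ℝ), ‖F f - f‖ ≤ A / (1 - A) * (CL * ‖f‖) := by
    intro f
    have htend : Tendsto (fun m => ‖backward (T f) m f - f‖) atTop (nhds ‖F f - f‖) :=
      ((hF f).sub tendsto_const_nhds).norm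
    refine le_of_tendsto htend (Filter.Eventually.of_forall fun m => ?_)
    have := hBbound f m f
    simp only [sub_self, norm_zero, mul_zero, zero_add] at this
    have hfac : A / (1 - A) * (1 - A ^ (m + 1)) ≤ A / (1 - A) * 1 := by
      apply mul_le_mul_of_nonneg_left _ (div_nonneg hA0 h1A.le)
      nlinarith [pow_nonneg hA0 (m + 1)]
    nlinarith [mul_nonneg hCL0 (norm_nonneg f)]
  -- affinity of T
  have haff : ∀ (c : ℝ) (f f' : C(Set.Icc a b, ℝ)) (m : ℕ) (g g' : C(Set.Icc a b, ℝ)),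
      T (c • f + f') m (c • g + g') = c • T f m g + T f' m g' := by
    intro c f f' m g g'
    ext t
    obtain ⟨i, h1, h2⟩ := hcover t
    rw [ContinuousMap.add_apply, ContinuousMap.smul_apply,
      hT (c • f + f') m (c • g + g') i t h1 h2, hT f m g i t h1 h2,
      hT f' m g' i t h1 h2]
    simp only [map_add, map_smul, ContinuousMap.add_apply, ContinuousMap.smul_apply,
      smul_eq_mul]
    ring
  -- affinity of the backward trajectories
  have hBaff : ∀ (c : ℝ) (f f' : C(Set.Icc a b, ℝ)) (m : ℕ)
      (g g' : C(Set.Icc a b, ℝ)),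
      backward (T (c • f + f')) m (c • g + g') =
        c • backward (T f) m g + backward (T f') m g' := by
    intro c f f' m
    induction m with
    | zero => intro g g'; exact haff c f f' 0 g g'
    | succ m ih =>
        intro g g'
        show backward (T (c • f + f')) m (T (c • f + f') (m + 1) (c • g + g')) = _
        rw [haff c f f' (m + 1) g g']
        exact ih _ _
  -- linearity of F
  have hlin : ∀ (c : ℝ) (f f' : C(Set.Icc a b, ℝ)),
      F (c • f + f') = c • F f + F f' := by
    intro c f f'
    refine tendsto_nhds_unique (hF (c • f + f')) ?_
    have : (fun m => backward (T (c • f + f')) m (c • f + f')) =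
        fun m => c • backward (T f) m f + backward (T f') m f' := by
      funext m; exact hBaff c f f' m f f'
    rw [this]
    exact (((hF f).const_smul c).add (hF f'))
  have hF0 : F 0 = 0 := by
    have h := hlin 1 0 0
    simp only [one_smul, add_zero] at h
    have : F 0 + 0 = F 0 + F 0 := by rw [add_zero]; exact h
    exact (add_left_cancel this).symm
  constructor
  · constructor
    · intro f g
      have h := hlin 1 f g
      simpa using h
    · intro c f
      have h := hlin c f 0
      rw [add_zero, hF0, add_zero] at h
      exact h
  · intro f
    have h1 : ‖F f‖ ≤ ‖f‖ + ‖F f - f‖ := by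
      calc ‖F f‖ = ‖f + (F f - f)‖ := by ring_nf
        _ ≤ ‖f‖ + ‖F f - f‖ := norm_add_le _ _
    have h2 := hnear f
    have : (1 + A / (1 - A) * CL) * ‖f‖ = ‖f‖ + A / (1 - A) * (CL * ‖f‖) := by ring
    linarith
end

section
/- If the scaling sequence satisfies ‖α‖_∞ < 1/(1 + C_L), where C_L = sup_m ‖Id − L_m‖, then the non-stationary fractal operator F_b^α : C(I) → C(I) satisfies the lower bound ‖F_b^α(f)‖_∞ ≥ ((1 − ‖α‖_∞(1 + C_L))/(1 − ‖α‖_∞))·‖f‖_∞ for all f; in particular F_b^α is injective. -/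
open Filter

theorem stmt_6
    {a b : ℝ} (hab : a < b) {N : ℕ} (hN : 0 < N)
    (x : Fin (N + 1) → ℝ) (hxmono : StrictMono x)
    (hx0 : x 0 = a) (hxN : x (Fin.last N) = b)
    -- inverses Q i of the affine contractions l i mapping I onto I_i
    (Q : Fin N → Set.Icc a b → Set.Icc a b)
    (hQ : ∀ (i : Fin N) (t : Set.Icc a b),
      (Q i t : ℝ) = a + (b - a) * ((t : ℝ) - x i.castSucc) / (x i.succ - x i.castSucc))
    -- the bounded linear operators L m, fixing endpoint values
    (L : ℕ → C(Set.Icc a b, ℝ) →L[ℝ] C(Set.Icc a b, ℝ))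
    (hLfix : ∀ (m : ℕ) (g : C(Set.Icc a b, ℝ)),
      L m g ⟨a, Set.left_mem_Icc.mpr hab.le⟩ = g ⟨a, Set.left_mem_Icc.mpr hab.le⟩ ∧
      L m g ⟨b, Set.right_mem_Icc.mpr hab.le⟩ = g ⟨b, Set.right_mem_Icc.mpr hab.le⟩)
    (CL : ℝ)
    (hCLbdd : BddAbove (Set.range fun m =>
      ‖ContinuousLinearMap.id ℝ C(Set.Icc a b, ℝ) - L m‖))
    (hCL : CL = ⨆ m, ‖ContinuousLinearMap.id ℝ C(Set.Icc a b, ℝ) - L m‖)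
    -- the scaling functions α_{i,m} with ‖α‖_∞ < 1
    (α : ℕ → Fin N → C(Set.Icc a b, ℝ)) (A : ℝ)
    (hαbdd : BddAbove (Set.range fun p : ℕ × Fin N => ‖α p.1 p.2‖))
    (hA : A = ⨆ p : ℕ × Fin N, ‖α p.1 p.2‖) (hA1 : A < 1)
    -- for each seed f, the RB operators T^{α_m} with b_m = L_m f
    (T : C(Set.Icc a b, ℝ) → ℕ → C(Set.Icc a b, ℝ) → C(Set.Icc a b, ℝ))
    (hT : ∀ (f : C(Set.Icc a b, ℝ)) (m : ℕ) (g : C(Set.Icc a b, ℝ)) (i : Fin N)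
        (t : Set.Icc a b), x i.castSucc ≤ (t : ℝ) → (t : ℝ) ≤ x i.succ →
      T f m g t = f t + α m i (Q i t) * (g (Q i t) - L m f (Q i t)))
    (hA2 : A < 1 / (1 + CL))
    (F : C(Set.Icc a b, ℝ) → C(Set.Icc a b, ℝ))
    (hF : ∀ f : C(Set.Icc a b, ℝ),
      Tendsto (fun m => backward (T f) m f) atTop (nhds (F f))) :
    (∀ f : C(Set.Icc a b, ℝ),
      (1 - A * (1 + CL)) / (1 - A) * ‖f‖ ≤ ‖F f‖) ∧ Function.Injective F := by
  haveI : Nonempty (Set.Icc a b) := Set.nonempty_Icc.2 hab.le |>.to_subtype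
  have hA0 : 0 ≤ A := by
    rw [hA]; exact le_ciSup_of_le hαbdd (0, ⟨0, hN⟩) (norm_nonneg _)
  have hCL0 : 0 ≤ CL := by
    rw [hCL]; exact Real.iSup_nonneg fun m => ContinuousLinearMap.opNorm_nonneg _
  have h1A : 0 < 1 - A := by linarith
  have hnum : 0 < 1 - A * (1 + CL) := by
    have := (lt_div_iff₀ (by linarith : (0:ℝ) < 1 + CL)).mp hA2
    linarith
  -- every point lies in some subinterval
  have hpiece : ∀ t : Set.Icc a b, ∃ i : Fin N,
      x i.castSucc ≤ (t : ℝ) ∧ (t : ℝ) ≤ x i.succ := by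
    intro t
    obtain ⟨ht1, ht2⟩ := t.2
    set S : Finset (Fin (N + 1)) := Finset.univ.filter (fun j => x j ≤ (t : ℝ)) with hS
    have h0S : (0 : Fin (N + 1)) ∈ S := by
      simp [hS, hx0, ht1]
    have hSne : S.Nonempty := ⟨0, h0S⟩
    set j := S.max' hSne with hj
    have hjS : j ∈ S := S.max'_mem hSne
    have hjle : x j ≤ (t : ℝ) := by simpa [hS] using hjS
    by_cases hjN : (j : ℕ) < N
    · refine ⟨⟨(j : ℕ), hjN⟩, ?_, ?_⟩
      · have : (⟨(j : ℕ), hjN⟩ : Fin N).castSucc = j := by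
          ext; simp
        rw [this]; exact hjle
      · by_contra hcon
        push_neg at hcon
        have hmem : (⟨(j : ℕ), hjN⟩ : Fin N).succ ∈ S := by
          simp only [hS, Finset.mem_filter, Finset.mem_univ, true_and]
          exact hcon.le
        have := S.le_max' _ hmem
        rw [← hj] at this
        have : ((⟨(j : ℕ), hjN⟩ : Fin N).succ : ℕ) ≤ (j : ℕ) := this
        simp at this
    · -- j = last, so t = b
      have hjlast : j = Fin.last N := by
        ext
        simp only [Fin.val_last]
        have := j.isLt
        omega
      have htb : (t : ℝ) = b := le_antisymm ht2 (by rw [hjlast, hxN] at hjle; exact hjle)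
      refine ⟨⟨N - 1, Nat.sub_lt hN one_pos⟩, ?_, ?_⟩
      · have hsucc : ((⟨N - 1, Nat.sub_lt hN one_pos⟩ : Fin N).succ : Fin (N+1)) = Fin.last N := by
          ext; simp; omega
        have := hxmono.monotone (Fin.castSucc_le_succ (⟨N - 1, Nat.sub_lt hN one_pos⟩ : Fin N))
        rw [hsucc, hxN] at this
        linarith [this, htb.symm.le]
      · have hsucc : ((⟨N - 1, Nat.sub_lt hN one_pos⟩ : Fin N).succ : Fin (N+1)) = Fin.last N := by
          ext; simp; omega
        rw [hsucc, hxN, htb]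
  -- pointwise bound for α
  have hαle : ∀ (m : ℕ) (i : Fin N) (s : Set.Icc a b), |α m i s| ≤ A := by
    intro m i s
    calc |α m i s| ≤ ‖α m i‖ := (α m i).norm_coe_le_norm s
      _ ≤ A := by rw [hA]; exact le_ciSup hαbdd (m, i)
  -- the basic one-step estimate
  have hstep : ∀ (f : C(Set.Icc a b, ℝ)) (m : ℕ) (g : C(Set.Icc a b, ℝ)),
      ‖T f m g - f‖ ≤ A * ‖g - f‖ + A * (CL * ‖f‖) := by
    intro f m g
    have hLmf : ‖f - L m f‖ ≤ CL * ‖f‖ := by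
      have h1 : f - L m f = (ContinuousLinearMap.id ℝ C(Set.Icc a b, ℝ) - L m) f := by
        simp
      rw [h1]
      calc ‖(ContinuousLinearMap.id ℝ C(Set.Icc a b, ℝ) - L m) f‖
          ≤ ‖ContinuousLinearMap.id ℝ C(Set.Icc a b, ℝ) - L m‖ * ‖f‖ :=
            ContinuousLinearMap.le_opNorm _ _
        _ ≤ CL * ‖f‖ := by
            apply mul_le_mul_of_nonneg_right _ (norm_nonneg _)
            rw [hCL]; exact le_ciSup hCLbdd m
    have key : ∀ t : Set.Icc a b, ‖(T f m g - f) t‖ ≤ A * ‖g - L m f‖ := by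
      intro t
      obtain ⟨i, h1, h2⟩ := hpiece t
      have : (T f m g - f) t = α m i (Q i t) * ((g - L m f) (Q i t)) := by
        simp only [ContinuousMap.sub_apply]
        rw [hT f m g i t h1 h2]
        ring
      rw [this]
      rw [Real.norm_eq_abs, abs_mul]
      exact mul_le_mul (hαle m i _) ((g - L m f).norm_coe_le_norm _) (abs_nonneg _) hA0
    have hnn : 0 ≤ A * ‖g - L m f‖ := mul_nonneg hA0 (norm_nonneg _)
    have h3 : ‖T f m g - f‖ ≤ A * ‖g - L m f‖ :=
      (ContinuousMap.norm_le _ hnn).mpr key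
    have h4 : ‖g - L m f‖ ≤ ‖g - f‖ + CL * ‖f‖ := by
      calc ‖g - L m f‖ = ‖(g - f) + (f - L m f)‖ := by ring_nf
        _ ≤ ‖g - f‖ + ‖f - L m f‖ := norm_add_le _ _
        _ ≤ ‖g - f‖ + CL * ‖f‖ := by linarith
    calc ‖T f m g - f‖ ≤ A * ‖g - L m f‖ := h3
      _ ≤ A * (‖g - f‖ + CL * ‖f‖) := mul_le_mul_of_nonneg_left h4 hA0
      _ = A * ‖g - f‖ + A * (CL * ‖f‖) := by ring
  -- main inductive estimate
  have hmain : ∀ (f : C(Set.Icc a b, ℝ)) (m : ℕ) (g : C(Set.Icc a b, ℝ)),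
      ‖backward (T f) m g - f‖ ≤
        A ^ (m + 1) * ‖g - f‖ + A * (CL * ‖f‖) * ∑ k ∈ Finset.range (m + 1), A ^ k := by
    intro f m
    induction m with
    | zero =>
        intro g
        have : backward (T f) 0 g = T f 0 g := rfl
        rw [this]
        simpa using hstep f 0 g
    | succ m ih =>
        intro g
        have hb : backward (T f) (m + 1) g = backward (T f) m (T f (m + 1) g) := rfl
        rw [hb]
        calc ‖backward (T f) m (T f (m + 1) g) - f‖
            ≤ A ^ (m + 1) * ‖T f (m + 1) g - f‖
              + A * (CL * ‖f‖) * ∑ k ∈ Finset.range (m + 1), A ^ k := ih _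
          _ ≤ A ^ (m + 1) * (A * ‖g - f‖ + A * (CL * ‖f‖))
              + A * (CL * ‖f‖) * ∑ k ∈ Finset.range (m + 1), A ^ k := by
              exact add_le_add_left
                (mul_le_mul_of_nonneg_left (hstep f (m + 1) g) (pow_nonneg hA0 _)) _
          _ = A ^ (m + 1 + 1) * ‖g - f‖
              + A * (CL * ‖f‖) * ∑ k ∈ Finset.range (m + 1 + 1), A ^ k := by
              conv_rhs => rw [Finset.sum_range_succ]
              ring
  -- geometric bound
  have hgeom : ∀ m : ℕ, (∑ k ∈ Finset.range (m + 1), A ^ k) ≤ 1 / (1 - A) := by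
    intro m
    rw [geom_sum_eq (by linarith : A ≠ 1)]
    have he : (A ^ (m + 1) - 1) / (A - 1) = (1 - A ^ (m + 1)) / (1 - A) := by
      rw [← neg_div_neg_eq]; ring_nf
    rw [he, div_le_div_iff₀ h1A h1A]
    nlinarith [pow_nonneg hA0 (m + 1)]
  -- the key distance bound for the limit
  have hdist : ∀ f : C(Set.Icc a b, ℝ), ‖F f - f‖ ≤ A * (CL * ‖f‖) / (1 - A) := by
    intro f
    have htend : Tendsto (fun m => ‖backward (T f) m f - f‖) atTop (nhds ‖F f - f‖) :=
      ((hF f).sub tendsto_const_nhds).norm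
    refine le_of_tendsto htend (Eventually.of_forall fun m => ?_)
    calc ‖backward (T f) m f - f‖
        ≤ A ^ (m + 1) * ‖f - f‖ + A * (CL * ‖f‖) * ∑ k ∈ Finset.range (m + 1), A ^ k :=
          hmain f m f
      _ = A * (CL * ‖f‖) * ∑ k ∈ Finset.range (m + 1), A ^ k := by simp
      _ ≤ A * (CL * ‖f‖) * (1 / (1 - A)) := by
          apply mul_le_mul_of_nonneg_left (hgeom m)
          exact mul_nonneg hA0 (mul_nonneg hCL0 (norm_nonneg _))
      _ = A * (CL * ‖f‖) / (1 - A) := by ring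
  -- the lower bound
  have hlow : ∀ f : C(Set.Icc a b, ℝ), (1 - A * (1 + CL)) / (1 - A) * ‖f‖ ≤ ‖F f‖ := by
    intro f
    have h1 : ‖f‖ - ‖F f‖ ≤ ‖F f - f‖ := by
      have h := norm_sub_norm_le f (F f)
      rw [norm_sub_rev] at h
      linarith
    have h2 := hdist f
    have heq : (1 - A * (1 + CL)) / (1 - A) * ‖f‖ = ‖f‖ - A * (CL * ‖f‖) / (1 - A) := by
      field_simp
      ring
    rw [heq]
    linarith
  refine ⟨hlow, ?_⟩
  -- linearity of the approximants in the seed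
  have hTsub : ∀ (f f' g g' : C(Set.Icc a b, ℝ)) (m : ℕ),
      T (f - f') m (g - g') = T f m g - T f' m g' := by
    intro f f' g g' m
    ext t
    obtain ⟨i, h1, h2⟩ := hpiece t
    simp only [ContinuousMap.sub_apply]
    rw [hT (f - f') m (g - g') i t h1 h2, hT f m g i t h1 h2, hT f' m g' i t h1 h2, map_sub]
    simp only [ContinuousMap.sub_apply]
    ring
  have hbsub : ∀ (f f' : C(Set.Icc a b, ℝ)) (m : ℕ) (g g' : C(Set.Icc a b, ℝ)),
      backward (T (f - f')) m (g - g') = backward (T f) m g - backward (T f') m g' := by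
    intro f f' m
    induction m with
    | zero =>
        intro g g'
        show T (f - f') 0 (g - g') = T f 0 g - T f' 0 g'
        exact hTsub f f' g g' 0
    | succ m ih =>
        intro g g'
        show backward (T (f - f')) m (T (f - f') (m + 1) (g - g')) = _
        rw [hTsub f f' g g' (m + 1), ih]
        rfl
  have hFsub : ∀ f f' : C(Set.Icc a b, ℝ), F (f - f') = F f - F f' := by
    intro f f'
    have h1 : Tendsto (fun m => backward (T (f - f')) m (f - f')) atTop
        (nhds (F f - F f')) := by
      have : (fun m => backward (T (f - f')) m (f - f'))
          = fun m => backward (T f) m f - backward (T f') m f' := by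
        funext m; exact hbsub f f' m f f'
      rw [this]
      exact (hF f).sub (hF f')
    exact tendsto_nhds_unique (hF (f - f')) h1
  intro f f' hff'
  have h0 : F (f - f') = 0 := by rw [hFsub, hff', sub_self]
  have := hlow (f - f')
  rw [h0, norm_zero] at this
  have hpos : 0 < (1 - A * (1 + CL)) / (1 - A) := div_pos hnum h1A
  have : ‖f - f'‖ ≤ 0 := by
    by_contra hc
    push_neg at hc
    nlinarith
  have : f - f' = 0 := norm_le_zero_iff.mp this
  exact sub_eq_zero.mp this
end

section
/- For ‖α‖_∞ < 1/(1 + C_L), the non-stationary fractal operator F_b^α : C(I) → C(I) is not a compact operator. -/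
open Filter

/-- `C(Icc a b, ℝ)` is infinite dimensional when `a < b`. -/
lemma aux_not_fd {a b : ℝ} (hab : a < b) :
    ¬ FiniteDimensional ℝ C(Set.Icc a b, ℝ) := by
  intro h
  let φ : Polynomial ℝ →ₗ[ℝ] C(Set.Icc a b, ℝ) :=
    { toFun := fun p => ⟨fun t => p.eval (t : ℝ), p.continuous.comp continuous_subtype_val⟩
      map_add' := fun p q => by ext t; simp
      map_smul' := fun c p => by ext t; simp }
  have hinj : Function.Injective φ := by
    rw [injective_iff_map_eq_zero]
    intro p hp
    apply Polynomial.eq_zero_of_infinite_isRoot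
    refine (Set.Icc_infinite hab).mono ?_
    intro t ht
    have : φ p ⟨t, ht⟩ = 0 := by rw [hp]; rfl
    exact this
  haveI : FiniteDimensional ℝ (Polynomial ℝ) := FiniteDimensional.of_injective φ hinj
  haveI : Fintype ℕ := FiniteDimensional.fintypeBasisIndex (Polynomial.basisMonomials ℝ)
  exact Infinite.not_finite (α := ℕ) (Finite.of_fintype ℕ)

/-- A bounded-below operator on an infinite dimensional complete space is not compact. -/
lemma aux_not_compact {E : Type*} [NormedAddCommGroup E] [NormedSpace ℝ E] [CompleteSpace E]
    (hfd : ¬ FiniteDimensional ℝ E) (F : E →L[ℝ] E) {c : ℝ} (hc : 0 < c)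
    (hb : ∀ f, c * ‖f‖ ≤ ‖F f‖) : ¬ IsCompactOperator F := by
  intro hcomp
  have hanti : AntilipschitzWith ⟨c⁻¹, by positivity⟩ F := by
    apply F.antilipschitz_of_bound
    intro f
    change ‖f‖ ≤ c⁻¹ * ‖F f‖
    rw [le_inv_mul_iff₀ hc]
    exact hb f
  have hce := hanti.isClosedEmbedding F.uniformContinuous
  have hK : IsCompact (closure (F '' Metric.closedBall 0 1)) :=
    hcomp.isCompact_closure_image_of_bounded Metric.isBounded_closedBall
  have h2 : IsCompact ((F : E → E) ⁻¹' closure (F '' Metric.closedBall 0 1)) :=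
    hce.isCompact_preimage hK
  have h3 : IsCompact (Metric.closedBall (0 : E) 1) := by
    apply h2.of_isClosed_subset Metric.isClosed_closedBall
    intro y hy
    exact subset_closure (Set.mem_image_of_mem F hy)
  exact hfd (FiniteDimensional.of_isCompact_closedBall₀ ℝ one_pos h3)

theorem stmt_10
    {a b : ℝ} (hab : a < b) {N : ℕ} (hN : 0 < N)
    (x : Fin (N + 1) → ℝ) (hxmono : StrictMono x)
    (hx0 : x 0 = a) (hxN : x (Fin.last N) = b)
    -- inverses Q i of the affine contractions l i mapping I onto I_i
    (Q : Fin N → Set.Icc a b → Set.Icc a b)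
    (hQ : ∀ (i : Fin N) (t : Set.Icc a b),
      (Q i t : ℝ) = a + (b - a) * ((t : ℝ) - x i.castSucc) / (x i.succ - x i.castSucc))
    -- the bounded linear operators L m, fixing endpoint values
    (L : ℕ → C(Set.Icc a b, ℝ) →L[ℝ] C(Set.Icc a b, ℝ))
    (hLfix : ∀ (m : ℕ) (g : C(Set.Icc a b, ℝ)),
      L m g ⟨a, Set.left_mem_Icc.mpr hab.le⟩ = g ⟨a, Set.left_mem_Icc.mpr hab.le⟩ ∧
      L m g ⟨b, Set.right_mem_Icc.mpr hab.le⟩ = g ⟨b, Set.right_mem_Icc.mpr hab.le⟩)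
    (CL : ℝ)
    (hCLbdd : BddAbove (Set.range fun m =>
      ‖ContinuousLinearMap.id ℝ C(Set.Icc a b, ℝ) - L m‖))
    (hCL : CL = ⨆ m, ‖ContinuousLinearMap.id ℝ C(Set.Icc a b, ℝ) - L m‖)
    -- the scaling functions α_{i,m} with ‖α‖_∞ < 1
    (α : ℕ → Fin N → C(Set.Icc a b, ℝ)) (A : ℝ)
    (hαbdd : BddAbove (Set.range fun p : ℕ × Fin N => ‖α p.1 p.2‖))
    (hA : A = ⨆ p : ℕ × Fin N, ‖α p.1 p.2‖) (hA1 : A < 1)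
    -- for each seed f, the RB operators T^{α_m} with b_m = L_m f
    (T : C(Set.Icc a b, ℝ) → ℕ → C(Set.Icc a b, ℝ) → C(Set.Icc a b, ℝ))
    (hT : ∀ (f : C(Set.Icc a b, ℝ)) (m : ℕ) (g : C(Set.Icc a b, ℝ)) (i : Fin N)
        (t : Set.Icc a b), x i.castSucc ≤ (t : ℝ) → (t : ℝ) ≤ x i.succ →
      T f m g t = f t + α m i (Q i t) * (g (Q i t) - L m f (Q i t)))
    (hA2 : A < 1 / (1 + CL))
    (F : C(Set.Icc a b, ℝ) →L[ℝ] C(Set.Icc a b, ℝ))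
    (hF : ∀ f : C(Set.Icc a b, ℝ),
      Tendsto (fun m => backward (T f) m f) atTop (nhds (F f))) :
    ¬ IsCompactOperator F := by
  -- basic positivity facts
  have hαle : ∀ m i, ‖α m i‖ ≤ A := fun m i => hA ▸ le_ciSup hαbdd (m, i)
  have hLle : ∀ m, ‖ContinuousLinearMap.id ℝ C(Set.Icc a b, ℝ) - L m‖ ≤ CL :=
    fun m => hCL ▸ le_ciSup hCLbdd m
  have hA0 : 0 ≤ A := le_trans (norm_nonneg _) (hαle 0 ⟨0, hN⟩)
  have hCL0 : 0 ≤ CL := le_trans (norm_nonneg (ContinuousLinearMap.id ℝ C(Set.Icc a b, ℝ) - L 0)) (hLle 0)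
  have h1A : 0 < 1 - A := by linarith
  -- the subintervals cover I
  have hcover : ∀ t : Set.Icc a b, ∃ i : Fin N,
      x i.castSucc ≤ (t : ℝ) ∧ (t : ℝ) ≤ x i.succ := by
    intro t
    obtain ⟨ht1, ht2⟩ := t.2
    set S : Finset (Fin N) := Finset.univ.filter fun i => x i.castSucc ≤ (t : ℝ) with hS
    have h0S : (⟨0, hN⟩ : Fin N) ∈ S := by
      simp only [hS, Finset.mem_filter, Finset.mem_univ, true_and]
      have : (⟨0, hN⟩ : Fin N).castSucc = 0 := by
        ext; simp
      rw [this, hx0]; exact ht1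
    have hSne : S.Nonempty := ⟨_, h0S⟩
    set i := S.max' hSne with hi
    have hi1 : x i.castSucc ≤ (t : ℝ) := by
      have := S.max'_mem hSne
      simp only [hS, Finset.mem_filter, Finset.mem_univ, true_and] at this
      exact this
    refine ⟨i, hi1, ?_⟩
    by_contra hcon
    push_neg at hcon
    rcases Fin.eq_castSucc_or_eq_last i.succ with ⟨j, hj⟩ | hj
    · have hjS : j ∈ S := by
        simp only [hS, Finset.mem_filter, Finset.mem_univ, true_and]
        rw [← hj]; exact hcon.le
      have hle : j ≤ i := S.le_max' j hjS
      have hji : (j : ℕ) = (i : ℕ) + 1 := by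
        have := congrArg Fin.val hj
        simpa [Fin.val_succ, Fin.coe_castSucc] using this.symm
      have : (j : ℕ) ≤ (i : ℕ) := hle
      omega
    · rw [hj, hxN] at hcon; exact absurd ht2 (not_le.mpr hcon)
  -- one step of the RB operator
  have step : ∀ (f g : C(Set.Icc a b, ℝ)) (m : ℕ),
      ‖T f m g - f‖ ≤ A * (‖g - f‖ + CL * ‖f‖) := by
    intro f g m
    have hgL : ‖g - L m f‖ ≤ ‖g - f‖ + CL * ‖f‖ := by
      have h2 : ‖f - L m f‖ ≤ CL * ‖f‖ := by
        have h3 : (ContinuousLinearMap.id ℝ C(Set.Icc a b, ℝ) - L m) f = f - L m f := by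
          simp
        calc ‖f - L m f‖ = ‖(ContinuousLinearMap.id ℝ C(Set.Icc a b, ℝ) - L m) f‖ := by
              rw [h3]
          _ ≤ ‖ContinuousLinearMap.id ℝ C(Set.Icc a b, ℝ) - L m‖ * ‖f‖ :=
              ContinuousLinearMap.le_opNorm _ _
          _ ≤ CL * ‖f‖ := mul_le_mul_of_nonneg_right (hLle m) (norm_nonneg f)
      calc ‖g - L m f‖ = ‖(g - f) + (f - L m f)‖ := by abel_nf
        _ ≤ ‖g - f‖ + ‖f - L m f‖ := norm_add_le _ _
        _ ≤ ‖g - f‖ + CL * ‖f‖ := by linarith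
    have hC0 : (0 : ℝ) ≤ A * (‖g - f‖ + CL * ‖f‖) := by positivity
    rw [ContinuousMap.norm_le _ hC0]
    intro t
    obtain ⟨i, h1, h2⟩ := hcover t
    have hTv := hT f m g i t h1 h2
    rw [ContinuousMap.sub_apply, hTv]
    have hsimp : f t + α m i (Q i t) * (g (Q i t) - L m f (Q i t)) - f t
        = α m i (Q i t) * (g (Q i t) - L m f (Q i t)) := by ring
    rw [hsimp, norm_mul]
    have e1 : ‖α m i (Q i t)‖ ≤ A :=
      le_trans (ContinuousMap.norm_coe_le_norm _ _) (hαle m i)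
    have e2 : ‖g (Q i t) - L m f (Q i t)‖ ≤ ‖g - f‖ + CL * ‖f‖ := by
      have : g (Q i t) - L m f (Q i t) = (g - L m f) (Q i t) := by
        simp
      rw [this]
      exact le_trans (ContinuousMap.norm_coe_le_norm _ _) hgL
    exact mul_le_mul e1 e2 (norm_nonneg _) hA0
  -- invariant ball of radius B around f
  have hball : ∀ (f g : C(Set.Icc a b, ℝ)) (m : ℕ),
      ‖g - f‖ ≤ A * CL * ‖f‖ / (1 - A) →
      ‖T f m g - f‖ ≤ A * CL * ‖f‖ / (1 - A) := by
    intro f g m hg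
    refine le_trans (step f g m) ?_
    have : A * (‖g - f‖ + CL * ‖f‖) ≤ A * (A * CL * ‖f‖ / (1 - A) + CL * ‖f‖) :=
      mul_le_mul_of_nonneg_left (by linarith) hA0
    refine le_trans this (le_of_eq ?_)
    field_simp
    ring
  have hback : ∀ (f : C(Set.Icc a b, ℝ)) (m : ℕ) (g : C(Set.Icc a b, ℝ)),
      ‖g - f‖ ≤ A * CL * ‖f‖ / (1 - A) →
      ‖backward (T f) m g - f‖ ≤ A * CL * ‖f‖ / (1 - A) := by
    intro f m
    induction m with
    | zero => exact fun g hg => hball f g 0 hg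
    | succ m ih =>
      intro g hg
      show ‖backward (T f) m (T f (m + 1) g) - f‖ ≤ _
      exact ih _ (hball f g (m + 1) hg)
  have hB0 : ∀ f : C(Set.Icc a b, ℝ), (0 : ℝ) ≤ A * CL * ‖f‖ / (1 - A) := by
    intro f; positivity
  have hFf : ∀ f : C(Set.Icc a b, ℝ), ‖F f - f‖ ≤ A * CL * ‖f‖ / (1 - A) := by
    intro f
    have ht : Tendsto (fun m => ‖backward (T f) m f - f‖) atTop (nhds ‖F f - f‖) :=
      (((hF f).sub tendsto_const_nhds).norm)
    refine le_of_tendsto ht (Eventually.of_forall fun m => ?_)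
    exact hback f m f (by simpa using hB0 f)
  -- lower bound
  have hc : 0 < (1 - A * (1 + CL)) / (1 - A) := by
    have h1 : A * (1 + CL) < 1 := by
      rw [lt_div_iff₀ (by linarith : (0:ℝ) < 1 + CL)] at hA2
      linarith
    exact div_pos (by linarith) h1A
  have hbound : ∀ f, (1 - A * (1 + CL)) / (1 - A) * ‖f‖ ≤ ‖F f‖ := by
    intro f
    have h1 : ‖f‖ - ‖F f‖ ≤ ‖F f - f‖ := by
      have := norm_sub_norm_le f (F f)
      rw [norm_sub_rev] at this
      linarith
    have h2 : (1 - A * (1 + CL)) / (1 - A) * ‖f‖ = ‖f‖ - A * CL * ‖f‖ / (1 - A) := by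
      field_simp
      ring
    rw [h2]
    have := hFf f
    linarith
  exact aux_not_compact (aux_not_fd hab) F hc hbound
end

section
/- Let f, b_m ∈ BV(I) with b_m(x_0) = f(x_0), b_m(x_N) = f(x_N), and let the scaling functions α_{i,m} ∈ BV(I) satisfy ‖α_{i,m}‖_BV < 1/(2N). Then each RB operator T^{α_m} maps BV_f(I) into itself and is a contraction on (BV_f(I), ‖·‖_BV) with contraction factor at most 2N·max_i ‖α_{i,m}‖_BV: for all g, h ∈ BV_f(I), ‖T^{α_m} g − T^{α_m} h‖_BV ≤ 2N·max_i ‖α_{i,m}‖_BV · ‖g − h‖_BV. -/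
open Filter

/-- The BV norm `‖f‖_BV = |f(x₀)| + V(f, [x₀, x_N])`. -/
noncomputable def bvNorm (p q : ℝ) (f : ℝ → ℝ) : ℝ :=
  |f p| + (eVariationOn f (Set.Icc p q)).toReal

lemma bvNorm_nonneg (p q : ℝ) (f : ℝ → ℝ) : 0 ≤ bvNorm p q f :=
  add_nonneg (abs_nonneg _) ENNReal.toReal_nonneg

lemma real_edist_eq (x y : ℝ) : edist x y = ENNReal.ofReal |x - y| := by
  rw [edist_dist, Real.dist_eq]

/-- master two-function domination lemma -/
lemma evar_two_le (u v F : ℝ → ℝ) (s : Set ℝ) (Cu Cv : ENNReal)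
    (hpt : ∀ p ∈ s, ∀ q ∈ s,
      edist (F p) (F q) ≤ Cu * edist (u p) (u q) + Cv * edist (v p) (v q)) :
    eVariationOn F s ≤ Cu * eVariationOn u s + Cv * eVariationOn v s := by
  refine iSup_le ?_
  rintro ⟨n, w, hw, ws⟩
  calc ∑ i ∈ Finset.range n, edist (F (w (i + 1))) (F (w i))
      ≤ ∑ i ∈ Finset.range n,
          (Cu * edist (u (w (i + 1))) (u (w i)) + Cv * edist (v (w (i + 1))) (v (w i))) :=
        Finset.sum_le_sum fun i _ => hpt _ (ws _) _ (ws _)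
    _ = Cu * ∑ i ∈ Finset.range n, edist (u (w (i + 1))) (u (w i))
        + Cv * ∑ i ∈ Finset.range n, edist (v (w (i + 1))) (v (w i)) := by
        rw [Finset.sum_add_distrib, Finset.mul_sum, Finset.mul_sum]
    _ ≤ Cu * eVariationOn u s + Cv * eVariationOn v s :=
        add_le_add (mul_le_mul_right (eVariationOn.sum_le (f := u) (n := n) hw ws) _)
          (mul_le_mul_right (eVariationOn.sum_le (f := v) (n := n) hw ws) _)

lemma evar_add_le (u v : ℝ → ℝ) (s : Set ℝ) :
    eVariationOn (fun t => u t + v t) s ≤ eVariationOn u s + eVariationOn v s := by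
  have h := evar_two_le u v (fun t => u t + v t) s 1 1 ?_
  · simpa using h
  · intro p _ q _
    simp only [one_mul]
    rw [real_edist_eq, real_edist_eq, real_edist_eq,
      ← ENNReal.ofReal_add (abs_nonneg _) (abs_nonneg _)]
    apply ENNReal.ofReal_le_ofReal
    have h1 : u p + v p - (u q + v q) = (u p - u q) + (v p - v q) := by ring
    rw [h1]
    exact abs_add_le _ _

lemma evar_sub_le (u v : ℝ → ℝ) (s : Set ℝ) :
    eVariationOn (fun t => u t - v t) s ≤ eVariationOn u s + eVariationOn v s := by
  have h := evar_two_le u v (fun t => u t - v t) s 1 1 ?_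
  · simpa using h
  · intro p _ q _
    simp only [one_mul]
    rw [real_edist_eq, real_edist_eq, real_edist_eq,
      ← ENNReal.ofReal_add (abs_nonneg _) (abs_nonneg _)]
    apply ENNReal.ofReal_le_ofReal
    have h1 : u p - v p - (u q - v q) = (u p - u q) - (v p - v q) := by ring
    rw [h1]
    exact abs_sub _ _

lemma evar_mul_le (u v : ℝ → ℝ) (s : Set ℝ) {Mu Mv : ℝ} (hMu0 : 0 ≤ Mu) (hMv0 : 0 ≤ Mv)
    (hMu : ∀ t ∈ s, |u t| ≤ Mu) (hMv : ∀ t ∈ s, |v t| ≤ Mv) :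
    eVariationOn (fun t => u t * v t) s ≤
      ENNReal.ofReal Mu * eVariationOn v s + ENNReal.ofReal Mv * eVariationOn u s := by
  refine evar_two_le v u _ s _ _ ?_
  intro p hp q hq
  rw [real_edist_eq, real_edist_eq, real_edist_eq, ← ENNReal.ofReal_mul hMu0,
    ← ENNReal.ofReal_mul hMv0,
    ← ENNReal.ofReal_add (mul_nonneg hMu0 (abs_nonneg _)) (mul_nonneg hMv0 (abs_nonneg _))]
  apply ENNReal.ofReal_le_ofReal
  have h1 : u p * v p - u q * v q = u p * (v p - v q) + v q * (u p - u q) := by ring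
  calc |u p * v p - u q * v q| = |u p * (v p - v q) + v q * (u p - u q)| := by rw [h1]
    _ ≤ |u p * (v p - v q)| + |v q * (u p - u q)| := abs_add_le _ _
    _ = |u p| * |v p - v q| + |v q| * |u p - u q| := by rw [abs_mul, abs_mul]
    _ ≤ Mu * |v p - v q| + Mv * |u p - u q| := by
        gcongr
        · exact hMu p hp
        · exact hMv q hq

lemma evar_partition (F : ℝ → ℝ) (y : ℕ → ℝ) (hy : Monotone y) :
    ∀ k : ℕ, eVariationOn F (Set.Icc (y 0) (y k)) =
      ∑ i ∈ Finset.range k, eVariationOn F (Set.Icc (y i) (y (i + 1))) := by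
  intro k
  induction k with
  | zero =>
      simp only [Finset.range_zero, Finset.sum_empty]
      exact eVariationOn.subsingleton F (by rw [Set.Icc_self]; exact Set.subsingleton_singleton)
  | succ k ih =>
      have h := eVariationOn.Icc_add_Icc F (s := Set.univ) (hy (Nat.zero_le k))
        (hy (Nat.le_succ k)) (Set.mem_univ (y k))
      simp only [Set.univ_inter] at h
      rw [Finset.sum_range_succ, ← ih, ← h]

lemma abs_le_bvNorm {u : ℝ → ℝ} {a b : ℝ} (hab : a ≤ b)
    (hu : BoundedVariationOn u (Set.Icc a b)) {t : ℝ} (ht : t ∈ Set.Icc a b) :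
    |u t| ≤ bvNorm a b u := by
  have ha : a ∈ Set.Icc a b := Set.left_mem_Icc.2 hab
  have h1 := hu.sub_le ht ha
  have h2 := hu.sub_le ha ht
  unfold bvNorm
  cases abs_cases (u t) <;> cases abs_cases (u a) <;> linarith

/-- The RB operators map `BV_f(I)` into itself and are contractions
with factor at most `2N · max_i ‖α_{i,m}‖_BV`. -/
theorem stmt_12
    {a b : ℝ} (hab : a < b) {N : ℕ} (hN : 0 < N)
    (x : Fin (N + 1) → ℝ) (hxmono : StrictMono x)
    (hx0 : x 0 = a) (hxN : x (Fin.last N) = b)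
    (Q : Fin N → ℝ → ℝ)
    (hQ : ∀ (i : Fin N) (t : ℝ),
      Q i t = a + (b - a) * (t - x i.castSucc) / (x i.succ - x i.castSucc))
    (f : ℝ → ℝ) (hf : BoundedVariationOn f (Set.Icc a b))
    (bm : ℕ → ℝ → ℝ)
    (hbm : ∀ m, BoundedVariationOn (bm m) (Set.Icc a b) ∧ bm m a = f a ∧ bm m b = f b)
    (α : ℕ → Fin N → ℝ → ℝ)
    (hαBV : ∀ (m : ℕ) (i : Fin N), BoundedVariationOn (α m i) (Set.Icc a b))
    (hαsmall : ∀ (m : ℕ) (i : Fin N), bvNorm a b (α m i) < 1 / (2 * N))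
    (T : ℕ → (ℝ → ℝ) → (ℝ → ℝ))
    (hT : ∀ (m : ℕ) (g : ℝ → ℝ) (i : Fin N) (t : ℝ),
      x i.castSucc ≤ t → t ≤ x i.succ →
      T m g t = f t + α m i (Q i t) * (g (Q i t) - bm m (Q i t))) :
    ∀ m : ℕ,
      (∀ g : ℝ → ℝ, BoundedVariationOn g (Set.Icc a b) → g a = f a → g b = f b →
        BoundedVariationOn (T m g) (Set.Icc a b) ∧ T m g a = f a ∧ T m g b = f b) ∧
      (∀ g h : ℝ → ℝ,
        BoundedVariationOn g (Set.Icc a b) → g a = f a → g b = f b →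
        BoundedVariationOn h (Set.Icc a b) → h a = f a → h b = f b →
        bvNorm a b (T m g - T m h) ≤
          2 * N * (⨆ i : Fin N, bvNorm a b (α m i)) * bvNorm a b (g - h)) := by
  intro m
  obtain ⟨hbmBV, hbma, hbmb⟩ := hbm m
  -- geometry of the subintervals
  have hd : ∀ i : Fin N, (0:ℝ) < x i.succ - x i.castSucc :=
    fun i => sub_pos.2 (hxmono (Fin.castSucc_lt_succ : i.castSucc < i.succ))
  have hQmono : ∀ i : Fin N, Monotone (Q i) := by
    intro i s t hst
    have hdi := hd i
    have hba : (0:ℝ) ≤ b - a := by linarith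
    rw [hQ, hQ]
    gcongr
  have hQimage : ∀ i : Fin N, Q i '' Set.Icc (x i.castSucc) (x i.succ) = Set.Icc a b := by
    intro i
    have hdi := hd i
    have hc : (0:ℝ) < (b - a) / (x i.succ - x i.castSucc) := div_pos (by linarith) hdi
    have hfun : Q i = fun t => (b - a) / (x i.succ - x i.castSucc) * t +
        (a - (b - a) / (x i.succ - x i.castSucc) * x i.castSucc) := by
      funext t; rw [hQ]; field_simp; ring
    rw [hfun, Set.image_affine_Icc' hc]
    have e1 : (b - a) / (x i.succ - x i.castSucc) * x i.castSucc +
        (a - (b - a) / (x i.succ - x i.castSucc) * x i.castSucc) = a := by ring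
    have e2 : (b - a) / (x i.succ - x i.castSucc) * x i.succ +
        (a - (b - a) / (x i.succ - x i.castSucc) * x i.castSucc) = b := by
      field_simp
      ring
    rw [e1, e2]
  have hIsub : ∀ i : Fin N, Set.Icc (x i.castSucc) (x i.succ) ⊆ Set.Icc a b := by
    intro i
    apply Set.Icc_subset_Icc
    · rw [← hx0]; exact hxmono.monotone (Fin.zero_le _)
    · rw [← hxN]; exact hxmono.monotone (Fin.le_last _)
  have hQa : ∀ i : Fin N, Q i (x i.castSucc) = a := by intro i; rw [hQ]; simp
  have hQb : ∀ i : Fin N, Q i (x i.succ) = b := by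
    intro i; rw [hQ, mul_div_assoc, div_self (hd i).ne', mul_one]; ring
  -- partition of the variation
  have hylt : ∀ n : ℕ, min n N < N + 1 := fun n => by omega
  set y : ℕ → ℝ := fun n => x ⟨min n N, hylt n⟩ with hy_def
  have hy : Monotone y := by
    intro p q hpq
    exact hxmono.monotone (by simp only [Fin.le_def]; omega)
  have hy0 : y 0 = a := by
    have e : (⟨min 0 N, hylt 0⟩ : Fin (N + 1)) = 0 := Fin.ext (by simp)
    simp only [hy_def]
    rw [e, hx0]
  have hyN : y N = b := by
    have e : (⟨min N N, hylt N⟩ : Fin (N + 1)) = Fin.last N := Fin.ext (by simp)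
    simp only [hy_def]
    rw [e, hxN]
  have hyc : ∀ i : Fin N, y i.val = x i.castSucc := by
    intro i
    have e : (⟨min i.val N, hylt i.val⟩ : Fin (N + 1)) = i.castSucc :=
      Fin.ext (by simp [Nat.min_eq_left i.isLt.le])
    simp only [hy_def]
    rw [e]
  have hys : ∀ i : Fin N, y (i.val + 1) = x i.succ := by
    intro i
    have e : (⟨min (i.val + 1) N, hylt (i.val + 1)⟩ : Fin (N + 1)) = i.succ :=
      Fin.ext (by simp [Nat.min_eq_left i.isLt])
    simp only [hy_def]
    rw [e]
  have hpart : ∀ F : ℝ → ℝ, eVariationOn F (Set.Icc a b) =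
      ∑ i : Fin N, eVariationOn F (Set.Icc (x i.castSucc) (x i.succ)) := by
    intro F
    rw [← hy0, ← hyN, evar_partition F y hy N,
      ← Fin.sum_univ_eq_sum_range (fun i => eVariationOn F (Set.Icc (y i) (y (i + 1)))) N]
    exact Finset.sum_congr rfl fun i _ => by rw [hyc i, hys i]
  -- transporting the variation from a subinterval to [a,b]
  have hkey : ∀ (i : Fin N) (P F : ℝ → ℝ),
      (∀ t ∈ Set.Icc (x i.castSucc) (x i.succ), F t = P (Q i t)) →
      eVariationOn F (Set.Icc (x i.castSucc) (x i.succ)) = eVariationOn P (Set.Icc a b) := by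
    intro i P F hEq
    have hEqOn : Set.EqOn F (P ∘ Q i) (Set.Icc (x i.castSucc) (x i.succ)) := fun t ht => hEq t ht
    rw [eVariationOn.eq_of_eqOn hEqOn,
      eVariationOn.comp_eq_of_monotoneOn P (Q i) ((hQmono i).monotoneOn _), hQimage i]
  -- boundary values
  have hTa : ∀ g : ℝ → ℝ, g a = f a → T m g a = f a := by
    intro g hga
    have hc : x (⟨0, hN⟩ : Fin N).castSucc = a := by
      rw [← hx0]; congr 1
    have hs : a ≤ x (⟨0, hN⟩ : Fin N).succ := by
      rw [← hx0]; exact hxmono.monotone (Fin.zero_le _)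
    rw [hT m g ⟨0, hN⟩ a (le_of_eq hc) hs]
    have hQ0 : Q ⟨0, hN⟩ a = a := by have := hQa ⟨0, hN⟩; rwa [hc] at this
    rw [hQ0, hga, hbma]; ring
  have hTb : ∀ g : ℝ → ℝ, g b = f b → T m g b = f b := by
    intro g hgb
    have hNlt : N - 1 < N := by omega
    have hs : x (⟨N - 1, hNlt⟩ : Fin N).succ = b := by
      rw [← hxN]; congr 1; ext; simp; omega
    have hc : x (⟨N - 1, hNlt⟩ : Fin N).castSucc ≤ b := by
      rw [← hxN]; exact hxmono.monotone (Fin.le_last _)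
    rw [hT m g ⟨N - 1, hNlt⟩ b hc (le_of_eq hs.symm)]
    have hQL : Q ⟨N - 1, hNlt⟩ b = b := by have := hQb ⟨N - 1, hNlt⟩; rwa [hs] at this
    rw [hQL, hgb, hbmb]; ring
  have hMα : ∀ (i : Fin N), ∀ t ∈ Set.Icc a b, |α m i t| ≤ bvNorm a b (α m i) :=
    fun i t ht => abs_le_bvNorm hab.le (hαBV m i) ht
  constructor
  · -- Part A : T maps BV_f into itself
    intro g hgBV hga hgb
    refine ⟨?_, hTa g hga, hTb g hgb⟩
    have hw : BoundedVariationOn (fun s => g s - bm m s) (Set.Icc a b) :=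
      ne_top_of_le_ne_top (ENNReal.add_ne_top.2 ⟨hgBV, hbmBV⟩) (evar_sub_le g (bm m) _)
    have hterm : ∀ i : Fin N,
        eVariationOn (T m g) (Set.Icc (x i.castSucc) (x i.succ)) ≠ ⊤ := by
      intro i
      set P : ℝ → ℝ := fun s => α m i s * (g s - bm m s) with hP
      have hEq : Set.EqOn (T m g) (fun t => f t + (P ∘ Q i) t)
          (Set.Icc (x i.castSucc) (x i.succ)) := by
        intro t ht
        rw [hT m g i t ht.1 ht.2]
        rfl
      have hcomp : eVariationOn (P ∘ Q i) (Set.Icc (x i.castSucc) (x i.succ)) =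
          eVariationOn P (Set.Icc a b) := hkey i P (P ∘ Q i) (fun t _ => rfl)
      have hPle := evar_mul_le (α m i) (fun s => g s - bm m s) (Set.Icc a b)
        (bvNorm_nonneg _ _ _) (bvNorm_nonneg _ _ _) (hMα i)
        (fun t ht => abs_le_bvNorm hab.le hw ht)
      rw [eVariationOn.eq_of_eqOn hEq]
      have hle2 : eVariationOn (fun t => f t + (P ∘ Q i) t)
          (Set.Icc (x i.castSucc) (x i.succ)) ≤
          eVariationOn f (Set.Icc a b) +
            (ENNReal.ofReal (bvNorm a b (α m i)) *
              eVariationOn (fun s => g s - bm m s) (Set.Icc a b) +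
             ENNReal.ofReal (bvNorm a b (fun s => g s - bm m s)) *
              eVariationOn (α m i) (Set.Icc a b)) := by
        refine (evar_add_le f (P ∘ Q i) _).trans
          (add_le_add (eVariationOn.mono f (hIsub i)) ?_)
        rw [hcomp]
        exact hPle
      refine ne_top_of_le_ne_top ?_ hle2
      exact ENNReal.add_ne_top.2 ⟨hf, ENNReal.add_ne_top.2
        ⟨ENNReal.mul_ne_top ENNReal.ofReal_ne_top hw,
         ENNReal.mul_ne_top ENNReal.ofReal_ne_top (hαBV m i)⟩⟩
    show eVariationOn (T m g) (Set.Icc a b) ≠ ⊤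
    rw [hpart (T m g)]
    exact ENNReal.sum_ne_top.2 fun i _ => hterm i
  · -- Part B : contraction estimate
    intro g h hgBV hga hgb hhBV hha hhb
    set w : ℝ → ℝ := g - h with hwdef
    have hwa : w a = 0 := by simp [hwdef, hga, hha]
    have hwBV : BoundedVariationOn w (Set.Icc a b) := by
      have hle := evar_sub_le g h (Set.Icc a b)
      have heq : eVariationOn w (Set.Icc a b) =
          eVariationOn (fun t => g t - h t) (Set.Icc a b) := rfl
      rw [BoundedVariationOn, heq]
      exact ne_top_of_le_ne_top (ENNReal.add_ne_top.2 ⟨hgBV, hhBV⟩) hle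
    set S : ℝ := ⨆ i : Fin N, bvNorm a b (α m i) with hS
    have hbdd : BddAbove (Set.range fun i : Fin N => bvNorm a b (α m i)) :=
      Set.Finite.bddAbove (Set.finite_range _)
    have hSle : ∀ i : Fin N, bvNorm a b (α m i) ≤ S := fun i => le_ciSup hbdd i
    have hS0 : 0 ≤ S := le_trans (bvNorm_nonneg _ _ _) (hSle ⟨0, hN⟩)
    have hw0 : 0 ≤ bvNorm a b w := bvNorm_nonneg _ _ _
    have hterm : ∀ i : Fin N,
        eVariationOn (T m g - T m h) (Set.Icc (x i.castSucc) (x i.succ)) ≤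
          ENNReal.ofReal (2 * S * bvNorm a b w) := by
      intro i
      have hEq : ∀ t ∈ Set.Icc (x i.castSucc) (x i.succ),
          (T m g - T m h) t = α m i (Q i t) * w (Q i t) := by
        intro t ht
        simp only [Pi.sub_apply]
        rw [hT m g i t ht.1 ht.2, hT m h i t ht.1 ht.2]
        simp only [hwdef, Pi.sub_apply]
        ring
      rw [hkey i (fun s => α m i s * w s) (T m g - T m h) hEq]
      have hmul := evar_mul_le (α m i) w (Set.Icc a b) (bvNorm_nonneg _ _ _) hw0 (hMα i)
        (fun t ht => abs_le_bvNorm hab.le hwBV ht)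
      refine hmul.trans ?_
      rw [← ENNReal.ofReal_toReal hwBV, ← ENNReal.ofReal_toReal (hαBV m i),
        ← ENNReal.ofReal_mul (bvNorm_nonneg _ _ _), ← ENNReal.ofReal_mul hw0,
        ← ENNReal.ofReal_add (mul_nonneg (bvNorm_nonneg _ _ _) ENNReal.toReal_nonneg)
          (mul_nonneg hw0 ENNReal.toReal_nonneg)]
      apply ENNReal.ofReal_le_ofReal
      have h1 : (eVariationOn w (Set.Icc a b)).toReal ≤ bvNorm a b w := by
        unfold bvNorm; exact le_add_of_nonneg_left (abs_nonneg _)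
      have h2 : (eVariationOn (α m i) (Set.Icc a b)).toReal ≤ bvNorm a b (α m i) := by
        unfold bvNorm; exact le_add_of_nonneg_left (abs_nonneg _)
      nlinarith [hSle i, bvNorm_nonneg a b (α m i), ENNReal.toReal_nonneg
        (a := eVariationOn w (Set.Icc a b)), ENNReal.toReal_nonneg
        (a := eVariationOn (α m i) (Set.Icc a b))]
    have htot : eVariationOn (T m g - T m h) (Set.Icc a b) ≤
        ENNReal.ofReal ((N : ℝ) * (2 * S * bvNorm a b w)) := by
      rw [hpart (T m g - T m h)]
      calc ∑ i : Fin N, eVariationOn (T m g - T m h) (Set.Icc (x i.castSucc) (x i.succ))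
          ≤ ∑ _i : Fin N, ENNReal.ofReal (2 * S * bvNorm a b w) :=
            Finset.sum_le_sum fun i _ => hterm i
        _ = (N : ENNReal) * ENNReal.ofReal (2 * S * bvNorm a b w) := by
            rw [Finset.sum_const, Finset.card_univ, Fintype.card_fin, nsmul_eq_mul]
        _ = ENNReal.ofReal ((N : ℝ) * (2 * S * bvNorm a b w)) := by
            rw [ENNReal.ofReal_mul (Nat.cast_nonneg N), ENNReal.ofReal_natCast]
    have hDa : (T m g - T m h) a = 0 := by
      simp [Pi.sub_apply, hTa g hga, hTa h hha]
    have hfin : (eVariationOn (T m g - T m h) (Set.Icc a b)).toReal ≤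
        (N : ℝ) * (2 * S * bvNorm a b w) :=
      ENNReal.toReal_le_of_le_ofReal
        (mul_nonneg (Nat.cast_nonneg N) (mul_nonneg (mul_nonneg two_pos.le hS0) hw0)) htot
    show bvNorm a b (T m g - T m h) ≤ 2 * (N : ℝ) * S * bvNorm a b w
    unfold bvNorm
    rw [hDa, abs_zero, zero_add]
    calc (eVariationOn (T m g - T m h) (Set.Icc a b)).toReal
        ≤ (N : ℝ) * (2 * S * bvNorm a b w) := hfin
      _ = 2 * (N : ℝ) * S * bvNorm a b w := by ring
end

section
/- Under the hypotheses of the BV construction (‖α_{i,m}‖_BV < 1/(2N) for all i, m, sup_m ‖b_m‖_BV < ∞), the backward trajectories T^{α_1} ∘ T^{α_2} ∘ ⋯ ∘ T^{α_m} g converge in (BV_f(I), ‖·‖_BV) to a unique function f_{b,BV}^α ∈ BV_f(I), independent of the initial function g ∈ BV_f(I). -/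
open Filter

lemma bvNorm_congr {p q : ℝ} (hpq : p ≤ q) {f g : ℝ → ℝ}
    (h : Set.EqOn f g (Set.Icc p q)) : bvNorm p q f = bvNorm p q g := by
  unfold bvNorm
  rw [eVariationOn.eq_of_eqOn h, h ⟨le_rfl, hpq⟩]

lemma eVar_add_le (f g : ℝ → ℝ) (s : Set ℝ) :
    eVariationOn (fun t => f t + g t) s ≤ eVariationOn f s + eVariationOn g s := by
  apply iSup_le
  rintro ⟨n, u, hu, hus⟩
  calc ∑ i ∈ Finset.range n, edist (f (u (i+1)) + g (u (i+1))) (f (u i) + g (u i))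
      ≤ ∑ i ∈ Finset.range n,
        (edist (f (u (i+1))) (f (u i)) + edist (g (u (i+1))) (g (u i))) := by
        apply Finset.sum_le_sum
        intro i _
        exact edist_add_add_le _ _ _ _
    _ = (∑ i ∈ Finset.range n, edist (f (u (i+1))) (f (u i)))
        + ∑ i ∈ Finset.range n, edist (g (u (i+1))) (g (u i)) := Finset.sum_add_distrib
    _ ≤ eVariationOn f s + eVariationOn g s :=
        add_le_add (eVariationOn.sum_le (f := f) (n := n) hu hus) (eVariationOn.sum_le (f := g) (n := n) hu hus)

lemma eVar_neg (f : ℝ → ℝ) (s : Set ℝ) :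
    eVariationOn (fun t => -(f t)) s = eVariationOn f s := by
  unfold eVariationOn
  congr 1
  funext p
  exact Finset.sum_congr rfl fun i _ => edist_neg_neg _ _

lemma sup_le_bvNorm {p q : ℝ} {f : ℝ → ℝ} (hf : BoundedVariationOn f (Set.Icc p q))
    {t : ℝ} (ht : t ∈ Set.Icc p q) (hpq : p ≤ q) : |f t| ≤ bvNorm p q f := by
  have h1 : dist (f t) (f p) ≤ (eVariationOn f (Set.Icc p q)).toReal :=
    hf.dist_le ht ⟨le_rfl, hpq⟩
  have : |f t| ≤ |f p| + dist (f t) (f p) := by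
    rw [Real.dist_eq]
    have := abs_sub_abs_le_abs_sub (f t) (f p)
    linarith [abs_nonneg (f t - f p)]
  exact this.trans (by unfold bvNorm; linarith)

lemma absdiff_le_varFromTo {a b : ℝ} {f : ℝ → ℝ} (hf : BoundedVariationOn f (Set.Icc a b))
    {p q : ℝ} (hp : p ∈ Set.Icc a b) (hq : q ∈ Set.Icc a b) (hpq : p ≤ q) :
    |f q - f p| ≤ variationOnFromTo f (Set.Icc a b) p q := by
  rw [variationOnFromTo.eq_of_le _ _ hpq]
  have h1 : edist (f q) (f p) ≤ eVariationOn f (Set.Icc a b ∩ Set.Icc p q) :=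
    eVariationOn.edist_le f ⟨hq, hpq, le_rfl⟩ ⟨hp, le_rfl, hpq⟩
  have h2 : eVariationOn f (Set.Icc a b ∩ Set.Icc p q) ≠ ⊤ :=
    (lt_of_le_of_lt (eVariationOn.mono f Set.inter_subset_left) hf.lt_top).ne
  have := ENNReal.toReal_mono h2 h1
  rwa [edist_dist, ENNReal.toReal_ofReal dist_nonneg, Real.dist_eq] at this

lemma varFromTo_le_toReal {a b : ℝ} {f : ℝ → ℝ} (hf : BoundedVariationOn f (Set.Icc a b))
    {r : ℝ} (hr : r ∈ Set.Icc a b) :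
    variationOnFromTo f (Set.Icc a b) a r ≤ (eVariationOn f (Set.Icc a b)).toReal := by
  rw [variationOnFromTo.eq_of_le _ _ hr.1]
  exact ENNReal.toReal_mono hf (eVariationOn.mono f Set.inter_subset_left)

lemma eVar_mul_le {a b : ℝ} (hab : a ≤ b) {u d : ℝ → ℝ}
    (hu : BoundedVariationOn u (Set.Icc a b)) (hd : BoundedVariationOn d (Set.Icc a b))
    (hda : d a = 0) :
    eVariationOn (fun t => u t * d t) (Set.Icc a b) ≤
      ENNReal.ofReal (bvNorm a b u * (eVariationOn d (Set.Icc a b)).toReal) := by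
  apply iSup_le
  rintro ⟨n, w, hw, hws⟩
  set s := Set.Icc a b with hs
  set A : ℕ → ℝ := fun k => variationOnFromTo u s a (w k) with hA
  set B : ℕ → ℝ := fun k => variationOnFromTo d s a (w k) with hB
  have hma : a ∈ s := ⟨le_rfl, hab⟩
  have hAnn : ∀ k, 0 ≤ A k := fun k => variationOnFromTo.nonneg_of_le _ _ (hws k).1
  have hBnn : ∀ k, 0 ≤ B k := fun k => variationOnFromTo.nonneg_of_le _ _ (hws k).1
  have hAstep : ∀ k, |u (w (k+1)) - u (w k)| ≤ A (k+1) - A k := by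
    intro k
    have h1 := absdiff_le_varFromTo hu (hws k) (hws (k+1)) (hw k.le_succ)
    have h2 := variationOnFromTo.add hu.locallyBoundedVariationOn hma (hws k) (hws (k+1))
    rw [← hs] at h1
    show |u (w (k+1)) - u (w k)| ≤ variationOnFromTo u s a (w (k+1)) - variationOnFromTo u s a (w k)
    linarith
  have hBstep : ∀ k, |d (w (k+1)) - d (w k)| ≤ B (k+1) - B k := by
    intro k
    have h1 := absdiff_le_varFromTo hd (hws k) (hws (k+1)) (hw k.le_succ)
    have h2 := variationOnFromTo.add hd.locallyBoundedVariationOn hma (hws k) (hws (k+1))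
    rw [← hs] at h1
    show |d (w (k+1)) - d (w k)| ≤ variationOnFromTo d s a (w (k+1)) - variationOnFromTo d s a (w k)
    linarith
  have hub : ∀ k, |u (w k)| ≤ |u a| + A k := by
    intro k
    have := absdiff_le_varFromTo hu hma (hws k) (hws k).1
    have h3 := abs_sub_abs_le_abs_sub (u (w k)) (u a)
    rw [← hs] at this
    show |u (w k)| ≤ |u a| + variationOnFromTo u s a (w k)
    linarith
  have hdb : ∀ k, |d (w k)| ≤ B k := by
    intro k
    have := absdiff_le_varFromTo hd hma (hws k) (hws k).1
    rw [hda, sub_zero, ← hs] at this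
    exact this
  have key : ∀ k, |u (w (k+1)) * d (w (k+1)) - u (w k) * d (w k)| ≤
      |u a| * (B (k+1) - B k) + (A (k+1) * B (k+1) - A k * B k) := by
    intro k
    have e1 : u (w (k+1)) * d (w (k+1)) - u (w k) * d (w k)
        = u (w (k+1)) * (d (w (k+1)) - d (w k)) + d (w k) * (u (w (k+1)) - u (w k)) := by ring
    have h1 : |u (w (k+1)) * (d (w (k+1)) - d (w k))| ≤ (|u a| + A (k+1)) * (B (k+1) - B k) := by
      rw [abs_mul]
      exact mul_le_mul (hub (k+1)) (hBstep k) (abs_nonneg _)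
        (by linarith [abs_nonneg (u a), hAnn (k+1)])
    have h2 : |d (w k) * (u (w (k+1)) - u (w k))| ≤ B k * (A (k+1) - A k) := by
      rw [abs_mul]
      exact mul_le_mul (hdb k) (hAstep k) (abs_nonneg _) (hBnn k)
    calc |u (w (k+1)) * d (w (k+1)) - u (w k) * d (w k)|
        ≤ |u (w (k+1)) * (d (w (k+1)) - d (w k))| + |d (w k) * (u (w (k+1)) - u (w k))| := by
          rw [e1]; exact abs_add_le _ _
      _ ≤ (|u a| + A (k+1)) * (B (k+1) - B k) + B k * (A (k+1) - A k) := add_le_add h1 h2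
      _ = |u a| * (B (k+1) - B k) + (A (k+1) * B (k+1) - A k * B k) := by ring
  have hsum : (∑ k ∈ Finset.range n,
      |u (w (k+1)) * d (w (k+1)) - u (w k) * d (w k)|) ≤
      bvNorm a b u * (eVariationOn d s).toReal := by
    have h1 : (∑ k ∈ Finset.range n, |u (w (k+1)) * d (w (k+1)) - u (w k) * d (w k)|) ≤
        ∑ k ∈ Finset.range n,
          (|u a| * (B (k+1) - B k) + (A (k+1) * B (k+1) - A k * B k)) :=
      Finset.sum_le_sum fun k _ => key k
    have h2 : ∑ k ∈ Finset.range n,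
        (|u a| * (B (k+1) - B k) + (A (k+1) * B (k+1) - A k * B k))
        = |u a| * (B n - B 0) + (A n * B n - A 0 * B 0) := by
      rw [Finset.sum_add_distrib, ← Finset.mul_sum, Finset.sum_range_sub (fun k => B k),
        Finset.sum_range_sub (fun k => A k * B k)]
    have hAn : A n ≤ (eVariationOn u s).toReal := varFromTo_le_toReal hu (hws n)
    have hBn : B n ≤ (eVariationOn d s).toReal := varFromTo_le_toReal hd (hws n)
    have hB0 : 0 ≤ B 0 := hBnn 0
    have hA0B0 : 0 ≤ A 0 * B 0 := mul_nonneg (hAnn 0) (hBnn 0)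
    have : |u a| * (B n - B 0) + (A n * B n - A 0 * B 0) ≤
        |u a| * (eVariationOn d s).toReal + (eVariationOn u s).toReal *
          (eVariationOn d s).toReal := by
      have hAB : A n * B n ≤ (eVariationOn u s).toReal * (eVariationOn d s).toReal :=
        mul_le_mul hAn hBn (hBnn n) ENNReal.toReal_nonneg
      have : |u a| * (B n - B 0) ≤ |u a| * (eVariationOn d s).toReal :=
        mul_le_mul_of_nonneg_left (by linarith) (abs_nonneg _)
      linarith
    calc (∑ k ∈ Finset.range n, |u (w (k+1)) * d (w (k+1)) - u (w k) * d (w k)|)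
        ≤ ∑ k ∈ Finset.range n,
            (|u a| * (B (k+1) - B k) + (A (k+1) * B (k+1) - A k * B k)) := h1
      _ = |u a| * (B n - B 0) + (A n * B n - A 0 * B 0) := h2
      _ ≤ |u a| * (eVariationOn d s).toReal
            + (eVariationOn u s).toReal * (eVariationOn d s).toReal := this
      _ = bvNorm a b u * (eVariationOn d s).toReal := by
          rw [hs]; unfold bvNorm; ring
  calc (∑ k ∈ Finset.range n, edist (u (w (k+1)) * d (w (k+1))) (u (w k) * d (w k)))
      = ENNReal.ofReal (∑ k ∈ Finset.range n,
          |u (w (k+1)) * d (w (k+1)) - u (w k) * d (w k)|) := by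
        rw [ENNReal.ofReal_sum_of_nonneg fun k _ => abs_nonneg _]
        exact Finset.sum_congr rfl fun k _ => by rw [edist_dist, Real.dist_eq]
    _ ≤ ENNReal.ofReal (bvNorm a b u * (eVariationOn d (Set.Icc a b)).toReal) :=
        ENNReal.ofReal_le_ofReal hsum

lemma bvNorm_add_le {a b : ℝ} (hab : a ≤ b) {u v : ℝ → ℝ}
    (hu : BoundedVariationOn u (Set.Icc a b)) (hv : BoundedVariationOn v (Set.Icc a b)) :
    bvNorm a b (fun t => u t + v t) ≤ bvNorm a b u + bvNorm a b v := by
  unfold bvNorm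
  have h1 : eVariationOn (fun t => u t + v t) (Set.Icc a b) ≤
      eVariationOn u (Set.Icc a b) + eVariationOn v (Set.Icc a b) := eVar_add_le u v _
  have h2 : (eVariationOn (fun t => u t + v t) (Set.Icc a b)).toReal ≤
      (eVariationOn u (Set.Icc a b)).toReal + (eVariationOn v (Set.Icc a b)).toReal := by
    rw [← ENNReal.toReal_add hu hv]
    exact ENNReal.toReal_mono (by exact ENNReal.add_ne_top.mpr ⟨hu, hv⟩) h1
  have h3 : |u a + v a| ≤ |u a| + |v a| := abs_add_le _ _
  linarith

lemma bvo_add {a b : ℝ} {u v : ℝ → ℝ}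
    (hu : BoundedVariationOn u (Set.Icc a b)) (hv : BoundedVariationOn v (Set.Icc a b)) :
    BoundedVariationOn (fun t => u t + v t) (Set.Icc a b) := by
  apply ne_top_of_le_ne_top _ (eVar_add_le u v (Set.Icc a b))
  exact ENNReal.add_ne_top.mpr ⟨hu, hv⟩

lemma eVar_split {h : ℝ → ℝ} {y : ℕ → ℝ} (hy : Monotone y) (n : ℕ) :
    eVariationOn h (Set.Icc (y 0) (y n)) ≤
      ∑ j ∈ Finset.range n, eVariationOn h (Set.Icc (y j) (y (j+1))) := by
  induction n with
  | zero =>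
      rw [eVariationOn.subsingleton]
      · simp
      · rw [Set.Icc_self]; exact Set.subsingleton_singleton
  | succ n ih =>
      have key := eVariationOn.Icc_add_Icc h (s := Set.univ) (hy (Nat.zero_le n))
        (hy n.le_succ) (Set.mem_univ (y n))
      simp only [Set.univ_inter] at key
      rw [← key, Finset.sum_range_succ]
      exact add_le_add ih (le_refl _)

lemma sum_abs_le_toReal {a b : ℝ} {u : ℝ → ℝ} (hu : BoundedVariationOn u (Set.Icc a b))
    {n : ℕ} {w : ℕ → ℝ} (hw : Monotone w) (hws : ∀ k, w k ∈ Set.Icc a b) :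
    (∑ k ∈ Finset.range n, |u (w (k+1)) - u (w k)|) ≤ (eVariationOn u (Set.Icc a b)).toReal := by
  have h1 : (∑ k ∈ Finset.range n, edist (u (w (k+1))) (u (w k))) ≤
      eVariationOn u (Set.Icc a b) := eVariationOn.sum_le (f := u) (n := n) hw hws
  have h2 : (∑ k ∈ Finset.range n, edist (u (w (k+1))) (u (w k)))
      = ENNReal.ofReal (∑ k ∈ Finset.range n, |u (w (k+1)) - u (w k)|) := by
    rw [ENNReal.ofReal_sum_of_nonneg fun k _ => abs_nonneg _]
    exact Finset.sum_congr rfl fun k _ => by rw [edist_dist, Real.dist_eq]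
  rw [h2] at h1
  have := ENNReal.toReal_mono hu h1
  rwa [ENNReal.toReal_ofReal (Finset.sum_nonneg fun k _ => abs_nonneg _)] at this

lemma eVar_congr_fun {f g : ℝ → ℝ} (h : f = g) (s : Set ℝ) :
    eVariationOn f s = eVariationOn g s := by rw [h]

lemma bvo_neg {a b : ℝ} {u : ℝ → ℝ} (hu : BoundedVariationOn u (Set.Icc a b)) :
    BoundedVariationOn (fun t => -(u t)) (Set.Icc a b) := by
  unfold BoundedVariationOn
  rw [eVar_neg]
  exact hu

lemma bvo_sub {a b : ℝ} {u v : ℝ → ℝ}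
    (hu : BoundedVariationOn u (Set.Icc a b)) (hv : BoundedVariationOn v (Set.Icc a b)) :
    BoundedVariationOn (fun t => u t - v t) (Set.Icc a b) := by
  have := bvo_add hu (bvo_neg hv)
  simpa [sub_eq_add_neg] using this

lemma bvNorm_neg (a b : ℝ) (u : ℝ → ℝ) :
    bvNorm a b (fun t => -(u t)) = bvNorm a b u := by
  unfold bvNorm
  rw [eVar_neg, abs_neg]

lemma bvNorm_sub_le {a b : ℝ} (hab : a ≤ b) {u v : ℝ → ℝ}
    (hu : BoundedVariationOn u (Set.Icc a b)) (hv : BoundedVariationOn v (Set.Icc a b)) :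
    bvNorm a b (fun t => u t - v t) ≤ bvNorm a b u + bvNorm a b v := by
  have h := bvNorm_add_le hab hu (bvo_neg hv)
  rw [bvNorm_neg] at h
  simpa [sub_eq_add_neg] using h

lemma bvNorm_self_sub (a b : ℝ) (u : ℝ → ℝ) : bvNorm a b (fun t => u t - u t) = 0 := by
  unfold bvNorm
  have h1 : (fun t => u t - u t) = fun _ : ℝ => (0:ℝ) := by funext t; ring
  rw [h1]
  rw [eVariationOn.constant_on]
  · simp
  · intro p hp q hq
    simp only [Set.mem_image] at hp hq
    obtain ⟨_, _, hp⟩ := hp; obtain ⟨_, _, hq⟩ := hq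
    rw [← hp, ← hq]

/-- The invariant class: BV functions matching `f` at the endpoints. -/
def GdP (a b : ℝ) (f g : ℝ → ℝ) : Prop :=
  BoundedVariationOn g (Set.Icc a b) ∧ g a = f a ∧ g b = f b

/-- Convergence of backward trajectories of the BV RB operators to a unique
non-stationary fractal function `f_{b,BV}^α ∈ BV_f(I)`. -/
theorem stmt_13
    {a b : ℝ} (hab : a < b) {N : ℕ} (hN : 0 < N)
    (x : Fin (N + 1) → ℝ) (hxmono : StrictMono x)
    (hx0 : x 0 = a) (hxN : x (Fin.last N) = b)
    (Q : Fin N → ℝ → ℝ)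
    (hQ : ∀ (i : Fin N) (t : ℝ),
      Q i t = a + (b - a) * (t - x i.castSucc) / (x i.succ - x i.castSucc))
    (f : ℝ → ℝ) (hf : BoundedVariationOn f (Set.Icc a b))
    (bm : ℕ → ℝ → ℝ)
    (hbm : ∀ m, BoundedVariationOn (bm m) (Set.Icc a b) ∧ bm m a = f a ∧ bm m b = f b)
    (hbB : ∃ B : ℝ, ∀ m, bvNorm a b (bm m) ≤ B)
    (α : ℕ → Fin N → ℝ → ℝ)
    (hαBV : ∀ (m : ℕ) (i : Fin N), BoundedVariationOn (α m i) (Set.Icc a b))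
    (hαsmall : ∀ (m : ℕ) (i : Fin N), bvNorm a b (α m i) < 1 / (2 * N))
    (T : ℕ → (ℝ → ℝ) → (ℝ → ℝ))
    (hT : ∀ (m : ℕ) (g : ℝ → ℝ) (i : Fin N) (t : ℝ),
      x i.castSucc ≤ t → t ≤ x i.succ →
      T m g t = f t + α m i (Q i t) * (g (Q i t) - bm m (Q i t))) :
    ∃ fb : ℝ → ℝ,
      (BoundedVariationOn fb (Set.Icc a b) ∧ fb a = f a ∧ fb b = f b) ∧
      (∀ g : ℝ → ℝ, BoundedVariationOn g (Set.Icc a b) → g a = f a → g b = f b →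
        Tendsto (fun m => bvNorm a b (backward T m g - fb)) atTop (nhds 0)) ∧
      (∀ fb' : ℝ → ℝ,
        (BoundedVariationOn fb' (Set.Icc a b) ∧ fb' a = f a ∧ fb' b = f b) →
        (∀ g : ℝ → ℝ, BoundedVariationOn g (Set.Icc a b) → g a = f a → g b = f b →
          Tendsto (fun m => bvNorm a b (backward T m g - fb')) atTop (nhds 0)) →
        Set.EqOn fb' fb (Set.Icc a b)) := by
  classical
  obtain ⟨B, hB⟩ := hbB
  have hab' : a ≤ b := hab.le
  have hNR : (0:ℝ) < N := by exact_mod_cast hN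
  have hNR' : (N:ℝ) ≠ 0 := hNR.ne'
  -- knot sequence on ℕ
  set y : ℕ → ℝ := fun k => x ⟨min k N, Nat.lt_succ_of_le (min_le_right k N)⟩ with hy
  have hymono : Monotone y := by
    intro i j hij
    exact hxmono.monotone (by simp only [Fin.mk_le_mk]; exact min_le_min hij le_rfl)
  have hy0 : y 0 = a := by
    rw [← hx0]; show x _ = x 0; congr 1
  have hyN : y N = b := by
    rw [← hxN]; show x _ = x (Fin.last N); congr 1; ext; simp
  have hyc : ∀ j (hj : j < N), y j = x ((⟨j, hj⟩ : Fin N).castSucc) := by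
    intro j hj; show x _ = _; congr 1; ext; simp [min_eq_left hj.le]
  have hys : ∀ j (hj : j < N), y (j+1) = x ((⟨j, hj⟩ : Fin N).succ) := by
    intro j hj; show x _ = _; congr 1; ext
    simp [min_eq_left (by omega : j + 1 ≤ N)]
  -- basic facts about the maps Q i
  have hden : ∀ i : Fin N, x i.castSucc < x i.succ := fun i => hxmono (Fin.castSucc_lt_succ (i := i))
  have hdenne : ∀ i : Fin N, x i.succ - x i.castSucc ≠ 0 :=
    fun i => sub_ne_zero_of_ne (hden i).ne'
  have hQl : ∀ i : Fin N, Q i (x i.castSucc) = a := by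
    intro i; rw [hQ]; simp
  have hQr : ∀ i : Fin N, Q i (x i.succ) = b := by
    intro i; rw [hQ]
    have h := hdenne i
    field_simp
    ring
  have hc : ∀ i : Fin N, (0:ℝ) < (b - a) / (x i.succ - x i.castSucc) :=
    fun i => div_pos (by linarith) (by linarith [hden i])
  have hQeq : ∀ i : Fin N, Q i = fun t => ((b-a)/(x i.succ - x i.castSucc)) * t +
      (a - ((b-a)/(x i.succ - x i.castSucc)) * x i.castSucc) := by
    intro i; funext t; rw [hQ]
    have h := hdenne i
    field_simp; ring
  have hQmono : ∀ i : Fin N, MonotoneOn (Q i) (Set.Icc (x i.castSucc) (x i.succ)) := by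
    intro i
    rw [hQeq i]
    intro s _ t _ hst
    exact add_le_add (mul_le_mul_of_nonneg_left hst (hc i).le) le_rfl
  have hQimg : ∀ i : Fin N, Q i '' Set.Icc (x i.castSucc) (x i.succ) = Set.Icc a b := by
    intro i
    rw [hQeq i]
    rw [show (fun t => ((b-a)/(x i.succ - x i.castSucc)) * t +
        (a - ((b-a)/(x i.succ - x i.castSucc)) * x i.castSucc)) =
        (((b-a)/(x i.succ - x i.castSucc)) * · +
        (a - ((b-a)/(x i.succ - x i.castSucc)) * x i.castSucc)) from rfl]
    rw [Set.image_affine_Icc' (hc i)]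
    have h := hdenne i
    have e1 : ((b-a)/(x i.succ - x i.castSucc)) * x i.castSucc +
        (a - ((b-a)/(x i.succ - x i.castSucc)) * x i.castSucc) = a := by ring
    have e2 : ((b-a)/(x i.succ - x i.castSucc)) * x i.succ +
        (a - ((b-a)/(x i.succ - x i.castSucc)) * x i.castSucc) = b := by field_simp; ring
    rw [e1, e2]
  -- covering of [a,b] by the pieces
  have hcover : ∀ t ∈ Set.Icc a b, ∃ i : Fin N, x i.castSucc ≤ t ∧ t ≤ x i.succ := by
    intro t ht
    set P : ℕ → Prop := fun j => y j ≤ t with hP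
    have hP0 : P 0 := by rw [hP]; simp only [hy0]; exact ht.1
    have hj0P : P (Nat.findGreatest P (N-1)) := Nat.findGreatest_spec (Nat.zero_le _) hP0
    have hj0le : Nat.findGreatest P (N-1) ≤ N - 1 := Nat.findGreatest_le _
    have hj0N : Nat.findGreatest P (N-1) < N := by omega
    refine ⟨⟨Nat.findGreatest P (N-1), hj0N⟩, ?_, ?_⟩
    · rw [← hyc _ hj0N]; exact hj0P
    · rw [← hys _ hj0N]
      by_cases hcase : Nat.findGreatest P (N-1) = N - 1
      · have hbb : y (Nat.findGreatest P (N-1) + 1) = b := by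
          rw [hcase, show N - 1 + 1 = N by omega, hyN]
        rw [hbb]; exact ht.2
      · have hle : Nat.findGreatest P (N-1) + 1 ≤ N - 1 := by omega
        have hnP := Nat.findGreatest_is_greatest (Nat.lt_succ_self _) hle
        exact (not_le.mp hnP).le
  -- endpoint pieces
  obtain ⟨i0, hxa⟩ : ∃ i : Fin N, x i.castSucc = a := by
    refine ⟨⟨0, hN⟩, ?_⟩
    have h0 : ((⟨0, hN⟩ : Fin N)).castSucc = (0 : Fin (N+1)) := by ext; simp
    rw [h0, hx0]
  obtain ⟨iN, hxb⟩ : ∃ i : Fin N, x i.succ = b := by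
    refine ⟨⟨N-1, by omega⟩, ?_⟩
    have h0 : ((⟨N-1, by omega⟩ : Fin N)).succ = Fin.last N := by
      ext; simp only [Fin.succ_mk, Fin.val_last]; omega
    rw [h0, hxN]
  -- endpoint values of T
  have hTa : ∀ m (g : ℝ → ℝ), g a = f a → T m g a = f a := by
    intro m g hga
    have h1 : x i0.castSucc ≤ a := le_of_eq hxa
    have h2 : a ≤ x i0.succ := by rw [← hxa]; exact (hden _).le
    rw [hT m g i0 a h1 h2]
    have hQa : Q i0 a = a := by conv_lhs => rw [← hxa]
                                rw [hQl]
    rw [hQa, hga, (hbm m).2.1]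
    ring
  have hTb : ∀ m (g : ℝ → ℝ), g b = f b → T m g b = f b := by
    intro m g hgb
    have h1 : x iN.castSucc ≤ b := by rw [← hxb]; exact (hden _).le
    have h2 : b ≤ x iN.succ := le_of_eq hxb.symm
    rw [hT m g iN b h1 h2]
    have hQb : Q iN b = b := by conv_lhs => rw [← hxb]
                                rw [hQr]
    rw [hQb, hgb, (hbm m).2.2]
    ring
  have hTbm : ∀ m, Set.EqOn (T m (bm m)) f (Set.Icc a b) := by
    intro m t ht
    obtain ⟨i, h1, h2⟩ := hcover t ht
    rw [hT m (bm m) i t h1 h2]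
    simp
  -- contraction of the variation
  have hvar : ∀ m (g h : ℝ → ℝ), BoundedVariationOn g (Set.Icc a b) →
      BoundedVariationOn h (Set.Icc a b) → g a = h a → g b = h b →
      eVariationOn (fun t => T m g t - T m h t) (Set.Icc a b) ≤
        ENNReal.ofReal (2⁻¹ * (eVariationOn (fun t => g t - h t) (Set.Icc a b)).toReal) := by
    intro m g h hg hh hgha hghb
    have hd : BoundedVariationOn (fun t => g t - h t) (Set.Icc a b) := bvo_sub hg hh
    have hd0 : g a - h a = 0 := by rw [hgha]; ring
    have hRnn : (0:ℝ) ≤ (eVariationOn (fun t => g t - h t) (Set.Icc a b)).toReal :=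
      ENNReal.toReal_nonneg
    have hpiece : ∀ j (hj : j < N),
        eVariationOn (fun t => T m g t - T m h t) (Set.Icc (y j) (y (j+1))) ≤
          ENNReal.ofReal (1 / (2*N) *
            (eVariationOn (fun t => g t - h t) (Set.Icc a b)).toReal) := by
      intro j hj
      rw [hyc j hj, hys j hj]
      have heq : Set.EqOn (fun t => T m g t - T m h t)
          ((fun s₀ => α m ⟨j, hj⟩ s₀ * (g s₀ - h s₀)) ∘ Q ⟨j, hj⟩)
          (Set.Icc (x (⟨j, hj⟩ : Fin N).castSucc) (x (⟨j, hj⟩ : Fin N).succ)) := by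
        intro t ht
        simp only [Function.comp_apply]
        rw [hT m g ⟨j, hj⟩ t ht.1 ht.2, hT m h ⟨j, hj⟩ t ht.1 ht.2]
        ring
      rw [eVariationOn.eq_of_eqOn heq,
        eVariationOn.comp_eq_of_monotoneOn _ _ (hQmono ⟨j, hj⟩), hQimg ⟨j, hj⟩]
      refine le_trans (eVar_mul_le hab' (hαBV m ⟨j, hj⟩) hd hd0) ?_
      exact ENNReal.ofReal_le_ofReal
        (mul_le_mul_of_nonneg_right (hαsmall m ⟨j, hj⟩).le hRnn)
    calc eVariationOn (fun t => T m g t - T m h t) (Set.Icc a b)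
        = eVariationOn (fun t => T m g t - T m h t) (Set.Icc (y 0) (y N)) := by
          rw [hy0, hyN]
      _ ≤ ∑ j ∈ Finset.range N, eVariationOn (fun t => T m g t - T m h t)
            (Set.Icc (y j) (y (j+1))) := eVar_split hymono N
      _ ≤ ∑ j ∈ Finset.range N, ENNReal.ofReal (1/(2*N) *
            (eVariationOn (fun t => g t - h t) (Set.Icc a b)).toReal) := by
          apply Finset.sum_le_sum
          intro j hj
          exact hpiece j (Finset.mem_range.mp hj)
      _ = (N : ENNReal) * ENNReal.ofReal (1/(2*N) *
            (eVariationOn (fun t => g t - h t) (Set.Icc a b)).toReal) := by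
          rw [Finset.sum_const, Finset.card_range, nsmul_eq_mul]
      _ = ENNReal.ofReal (2⁻¹ *
            (eVariationOn (fun t => g t - h t) (Set.Icc a b)).toReal) := by
          rw [← ENNReal.ofReal_natCast N, ← ENNReal.ofReal_mul (by positivity)]
          congr 1
          field_simp
  have hBVD : ∀ m (g h : ℝ → ℝ), BoundedVariationOn g (Set.Icc a b) →
      BoundedVariationOn h (Set.Icc a b) → g a = h a → g b = h b →
      BoundedVariationOn (fun t => T m g t - T m h t) (Set.Icc a b) :=
    fun m g h hg hh ha hb =>
      ne_top_of_le_ne_top ENNReal.ofReal_ne_top (hvar m g h hg hh ha hb)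
  -- contraction in the BV norm
  have hcontr : ∀ m (g h : ℝ → ℝ), GdP a b f g → GdP a b f h →
      bvNorm a b (fun t => T m g t - T m h t) ≤ 2⁻¹ * bvNorm a b (fun t => g t - h t) := by
    intro m g h hgg hhh
    have hea : g a = h a := hgg.2.1.trans hhh.2.1.symm
    have heb : g b = h b := hgg.2.2.trans hhh.2.2.symm
    have h0 : T m g a - T m h a = 0 := by
      rw [hTa m g hgg.2.1, hTa m h hhh.2.1]; ring
    have hea0 : g a - h a = 0 := by rw [hea]; ring
    have h2 := ENNReal.toReal_le_of_le_ofReal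
      (by positivity) (hvar m g h hgg.1 hhh.1 hea heb)
    simp only [bvNorm]
    rw [h0, hea0, abs_zero]
    linarith
  -- T maps the class into itself
  have hGdT : ∀ m (g : ℝ → ℝ), GdP a b f g → GdP a b f (T m g) := by
    intro m g hg
    refine ⟨?_, hTa m g hg.2.1, hTb m g hg.2.2⟩
    have hDbv : BoundedVariationOn (fun t => T m g t - T m (bm m) t) (Set.Icc a b) :=
      hBVD m g (bm m) hg.1 (hbm m).1 (hg.2.1.trans (hbm m).2.1.symm)
        (hg.2.2.trans (hbm m).2.2.symm)
    have hWbv : BoundedVariationOn (T m (bm m)) (Set.Icc a b) := by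
      unfold BoundedVariationOn
      rw [eVariationOn.eq_of_eqOn (hTbm m)]
      exact hf
    have hsplit : T m g = (fun t => (T m g t - T m (bm m) t) + T m (bm m) t) := by
      funext t; ring
    show BoundedVariationOn (T m g) (Set.Icc a b)
    rw [hsplit]
    exact bvo_add hDbv hWbv
  -- backward trajectories: invariance and contraction
  have hback : ∀ m (g h : ℝ → ℝ), GdP a b f g → GdP a b f h →
      GdP a b f (backward T m g) ∧
      bvNorm a b (fun t => backward T m g t - backward T m h t) ≤
        (2⁻¹:ℝ)^(m+1) * bvNorm a b (fun t => g t - h t) := by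
    intro m
    induction m with
    | zero =>
        intro g h hg hh
        refine ⟨hGdT 0 g hg, ?_⟩
        have := hcontr 0 g h hg hh
        simpa [backward] using this
    | succ m ih =>
        intro g h hg hh
        have h1 := ih (T (m+1) g) (T (m+1) h) (hGdT _ _ hg) (hGdT _ _ hh)
        refine ⟨h1.1, ?_⟩
        show bvNorm a b
          (fun t => backward T m (T (m+1) g) t - backward T m (T (m+1) h) t) ≤ _
        refine le_trans h1.2 ?_
        have h2 := hcontr (m+1) g h hg hh
        calc (2⁻¹:ℝ)^(m+1) * bvNorm a b (fun t => T (m+1) g t - T (m+1) h t)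
            ≤ (2⁻¹:ℝ)^(m+1) * (2⁻¹ * bvNorm a b (fun t => g t - h t)) :=
              mul_le_mul_of_nonneg_left h2 (by positivity)
          _ = (2⁻¹:ℝ)^(m+1+1) * bvNorm a b (fun t => g t - h t) := by ring
  have hfGd : GdP a b f f := ⟨hf, rfl, rfl⟩
  have hGdψ : ∀ m, GdP a b f (backward T m f) := fun m => (hback m f f hfGd hfGd).1
  -- uniform displacement bound
  have hBge : (0:ℝ) ≤ B := le_trans (bvNorm_nonneg a b (bm 0)) (hB 0)
  set Kf : ℝ := 2⁻¹ * (bvNorm a b f + B) with hKf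
  have hKnn : 0 ≤ Kf := by
    rw [hKf]
    have := bvNorm_nonneg a b f
    positivity
  have hdisp : ∀ m, bvNorm a b (fun t => T m f t - f t) ≤ Kf := by
    intro m
    have hbmGd : GdP a b f (bm m) := ⟨(hbm m).1, (hbm m).2.1, (hbm m).2.2⟩
    have heq2 : Set.EqOn (fun t => T m (bm m) t - f t) (fun t => f t - f t)
        (Set.Icc a b) := by
      intro t ht
      simp only []
      rw [hTbm m ht]
    have hD1 : BoundedVariationOn (fun t => T m f t - T m (bm m) t) (Set.Icc a b) :=
      hBVD m f (bm m) hf (hbm m).1 (hbm m).2.1.symm (hbm m).2.2.symm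
    have hD2 : BoundedVariationOn (fun t => T m (bm m) t - f t) (Set.Icc a b) := by
      unfold BoundedVariationOn
      rw [eVariationOn.eq_of_eqOn heq2]
      exact bvo_sub hf hf
    have hsplit : (fun t => T m f t - f t) =
        (fun t => (T m f t - T m (bm m) t) + (T m (bm m) t - f t)) := by
      funext t; ring
    rw [hsplit]
    refine le_trans (bvNorm_add_le hab' hD1 hD2) ?_
    have e2 : bvNorm a b (fun t => T m (bm m) t - f t) = 0 := by
      rw [bvNorm_congr hab' heq2, bvNorm_self_sub]
    have e1 : bvNorm a b (fun t => T m f t - T m (bm m) t) ≤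
        2⁻¹ * bvNorm a b (fun t => f t - bm m t) :=
      hcontr m f (bm m) hfGd hbmGd
    have e3 : bvNorm a b (fun t => f t - bm m t) ≤ bvNorm a b f + B :=
      le_trans (bvNorm_sub_le hab' hf (hbm m).1) (by linarith [hB m])
    rw [hKf]
    have : (0:ℝ) ≤ 2⁻¹ := by norm_num
    nlinarith
  -- successive differences of the trajectory
  have hstep : ∀ m, bvNorm a b
      (fun t => backward T (m+1) f t - backward T m f t) ≤ (2⁻¹:ℝ)^(m+1) * Kf := by
    intro m
    have h1 := (hback m (T (m+1) f) f (hGdT (m+1) f hfGd) hfGd).2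
    show bvNorm a b
      (fun t => backward T m (T (m+1) f) t - backward T m f t) ≤ _
    refine le_trans h1 ?_
    exact mul_le_mul_of_nonneg_left (hdisp (m+1)) (by positivity)
  -- Cauchy estimate
  have hcau' : ∀ n m, m ≤ n → bvNorm a b
      (fun t => backward T n f t - backward T m f t) ≤
      ((2⁻¹:ℝ)^m - (2⁻¹)^n) * Kf := by
    intro n
    induction n with
    | zero =>
        intro m hm
        have hm0 : m = 0 := Nat.le_zero.mp hm
        subst hm0
        rw [bvNorm_self_sub]
        simp
    | succ n ih =>
        intro m hm
        rcases eq_or_lt_of_le hm with heq | hlt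
        · subst heq
          rw [bvNorm_self_sub]
          simp
        · have hm' : m ≤ n := by omega
          have h1 := hstep n
          have h2 := ih m hm'
          have hBV1 : BoundedVariationOn
              (fun t => backward T (n+1) f t - backward T n f t) (Set.Icc a b) :=
            bvo_sub (hGdψ (n+1)).1 (hGdψ n).1
          have hBV2 : BoundedVariationOn
              (fun t => backward T n f t - backward T m f t) (Set.Icc a b) :=
            bvo_sub (hGdψ n).1 (hGdψ m).1
          have hsplit : (fun t => backward T (n+1) f t - backward T m f t) =
              (fun t => (backward T (n+1) f t - backward T n f t) +
                (backward T n f t - backward T m f t)) := by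
            funext t; ring
          rw [hsplit]
          refine le_trans (bvNorm_add_le hab' hBV1 hBV2) ?_
          have hkey : (2⁻¹:ℝ)^(n+1) * Kf + ((2⁻¹)^m - (2⁻¹)^n) * Kf =
              ((2⁻¹)^m - (2⁻¹)^(n+1)) * Kf := by
            rw [pow_succ]
            ring
          linarith
  have hcau : ∀ m n, m ≤ n → bvNorm a b
      (fun t => backward T n f t - backward T m f t) ≤ (2⁻¹:ℝ)^m * Kf := by
    intro m n hmn
    refine le_trans (hcau' n m hmn) ?_
    have h1 : (0:ℝ) ≤ (2⁻¹)^n * Kf := by positivity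
    have h2 : ((2⁻¹:ℝ)^m - (2⁻¹)^n) * Kf = (2⁻¹)^m * Kf - (2⁻¹)^n * Kf := by ring
    linarith
  -- pointwise Cauchy property and the limit function
  have hPW : ∀ m n, m ≤ n → ∀ t ∈ Set.Icc a b,
      |backward T n f t - backward T m f t| ≤ (2⁻¹:ℝ)^m * Kf := by
    intro m n hmn t ht
    have hBV := bvo_sub (hGdψ n).1 (hGdψ m).1
    exact le_trans (sup_le_bvNorm hBV ht hab') (hcau m n hmn)
  have hcauchy : ∀ t ∈ Set.Icc a b, CauchySeq (fun m => backward T m f t) := by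
    intro t ht
    apply cauchySeq_of_le_geometric 2⁻¹ Kf (by norm_num)
    intro n
    rw [dist_comm, Real.dist_eq]
    refine le_trans (hPW n (n+1) (Nat.le_succ n) t ht) ?_
    have : (2⁻¹:ℝ)^n * Kf = Kf * 2⁻¹^n := mul_comm _ _
    linarith
  set fb : ℝ → ℝ := fun t => limUnder atTop (fun m => backward T m f t) with hfbdef
  have htends : ∀ t ∈ Set.Icc a b,
      Tendsto (fun m => backward T m f t) atTop (nhds (fb t)) :=
    fun t ht => (hcauchy t ht).tendsto_limUnder
  have hfba : fb a = f a := by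
    show limUnder atTop (fun m => backward T m f a) = f a
    have hconst : (fun m => backward T m f a) = fun _ => f a :=
      funext fun m => (hGdψ m).2.1
    rw [hconst]
    exact Tendsto.limUnder_eq tendsto_const_nhds
  have hfbb : fb b = f b := by
    show limUnder atTop (fun m => backward T m f b) = f b
    have hconst : (fun m => backward T m f b) = fun _ => f b :=
      funext fun m => (hGdψ m).2.2
    rw [hconst]
    exact Tendsto.limUnder_eq tendsto_const_nhds
  -- convergence of the variation to the limit
  have hmain : ∀ m, eVariationOn (fun t => backward T m f t - fb t) (Set.Icc a b) ≤
      ENNReal.ofReal ((2⁻¹:ℝ)^m * Kf) := by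
    intro m
    apply iSup_le
    rintro ⟨n, w, hw, hws⟩
    have hS : Tendsto (fun j => ∑ k ∈ Finset.range n,
        |(backward T m f (w (k+1)) - backward T j f (w (k+1))) -
         (backward T m f (w k) - backward T j f (w k))|) atTop
        (nhds (∑ k ∈ Finset.range n,
        |(backward T m f (w (k+1)) - fb (w (k+1))) -
         (backward T m f (w k) - fb (w k))|)) := by
      apply tendsto_finset_sum
      intro k _
      exact (((tendsto_const_nhds.sub (htends _ (hws (k+1))))).sub
        (tendsto_const_nhds.sub (htends _ (hws k)))).abs
    have hbnd : ∀ j, m ≤ j → (∑ k ∈ Finset.range n,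
        |(backward T m f (w (k+1)) - backward T j f (w (k+1))) -
         (backward T m f (w k) - backward T j f (w k))|) ≤ (2⁻¹:ℝ)^m * Kf := by
      intro j hj
      have hu : BoundedVariationOn
          (fun t => backward T m f t - backward T j f t) (Set.Icc a b) :=
        bvo_sub (hGdψ m).1 (hGdψ j).1
      refine le_trans (sum_abs_le_toReal hu hw hws) ?_
      have h1 : (eVariationOn (fun t => backward T m f t - backward T j f t)
          (Set.Icc a b)).toReal ≤
          bvNorm a b (fun t => backward T m f t - backward T j f t) :=
        le_add_of_nonneg_left (abs_nonneg _)
      have h2 : bvNorm a b (fun t => backward T m f t - backward T j f t)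
          = bvNorm a b (fun t => backward T j f t - backward T m f t) := by
        rw [← bvNorm_neg a b (fun t => backward T j f t - backward T m f t)]
        congr 1
        funext t
        ring
      refine le_trans h1 ?_
      rw [h2]
      exact hcau m j hj
    have hSle : (∑ k ∈ Finset.range n,
        |(backward T m f (w (k+1)) - fb (w (k+1))) -
         (backward T m f (w k) - fb (w k))|) ≤ (2⁻¹:ℝ)^m * Kf :=
      le_of_tendsto hS (Filter.eventually_atTop.mpr ⟨m, hbnd⟩)
    calc (∑ k ∈ Finset.range n,
          edist ((fun t => backward T m f t - fb t) (w (k+1)))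
                ((fun t => backward T m f t - fb t) (w k)))
        = ENNReal.ofReal (∑ k ∈ Finset.range n,
            |(backward T m f (w (k+1)) - fb (w (k+1))) -
             (backward T m f (w k) - fb (w k))|) := by
          rw [ENNReal.ofReal_sum_of_nonneg fun k _ => abs_nonneg _]
          exact Finset.sum_congr rfl fun k _ => by rw [edist_dist, Real.dist_eq]
      _ ≤ ENNReal.ofReal ((2⁻¹:ℝ)^m * Kf) := ENNReal.ofReal_le_ofReal hSle
  have hψfbBV : ∀ m, BoundedVariationOn
      (fun t => backward T m f t - fb t) (Set.Icc a b) :=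
    fun m => ne_top_of_le_ne_top ENNReal.ofReal_ne_top (hmain m)
  have hfbBV : BoundedVariationOn fb (Set.Icc a b) := by
    have hsplit : fb = fun t => backward T 0 f t + -(backward T 0 f t - fb t) := by
      funext t; ring
    show BoundedVariationOn fb (Set.Icc a b)
    rw [hsplit]
    exact bvo_add (hGdψ 0).1 (bvo_neg (hψfbBV 0))
  have hψfb : ∀ m, bvNorm a b (fun t => backward T m f t - fb t) ≤ (2⁻¹:ℝ)^m * Kf := by
    intro m
    have h0 : backward T m f a - fb a = 0 := by rw [(hGdψ m).2.1, hfba]; ring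
    have h1 := ENNReal.toReal_le_of_le_ofReal
      (mul_nonneg (by positivity) hKnn) (hmain m)
    simp only [bvNorm]
    rw [h0, abs_zero]
    linarith
  -- the convergence statement, for an arbitrary admissible initial function
  have htendsto : ∀ g : ℝ → ℝ, BoundedVariationOn g (Set.Icc a b) → g a = f a →
      g b = f b → Tendsto (fun m => bvNorm a b (backward T m g - fb)) atTop (nhds 0) := by
    intro g hg hga hgb
    have hgGd : GdP a b f g := ⟨hg, hga, hgb⟩
    set C : ℝ := 2⁻¹ * bvNorm a b (fun t => g t - f t) + Kf with hC
    have hbd : ∀ m, bvNorm a b (backward T m g - fb) ≤ (2⁻¹:ℝ)^m * C := by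
      intro m
      have hsplit : (backward T m g - fb) =
          fun t => (backward T m g t - backward T m f t) +
            (backward T m f t - fb t) := by
        funext t
        simp only [Pi.sub_apply]
        ring
      rw [hsplit]
      have hBV1 : BoundedVariationOn
          (fun t => backward T m g t - backward T m f t) (Set.Icc a b) :=
        bvo_sub ((hback m g f hgGd hfGd).1).1 (hGdψ m).1
      refine le_trans (bvNorm_add_le hab' hBV1 (hψfbBV m)) ?_
      have h1 := (hback m g f hgGd hfGd).2
      have h2 := hψfb m
      have hexp : (2⁻¹:ℝ)^(m+1) * bvNorm a b (fun t => g t - f t) +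
          (2⁻¹)^m * Kf = (2⁻¹)^m * C := by
        rw [hC, pow_succ]
        ring
      linarith
    apply squeeze_zero (fun m => bvNorm_nonneg a b _) hbd
    have := (tendsto_pow_atTop_nhds_zero_of_lt_one
      (by norm_num : (0:ℝ) ≤ 2⁻¹) (by norm_num : (2⁻¹:ℝ) < 1)).mul_const C
    simpa using this
  refine ⟨fb, ⟨hfbBV, hfba, hfbb⟩, htendsto, ?_⟩
  -- uniqueness
  intro fb' hfb' htend'
  have h1 := htend' f hf rfl rfl
  have h2 := htendsto f hf rfl rfl
  intro t ht
  have hkey : ∀ m, |fb' t - fb t| ≤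
      bvNorm a b (backward T m f - fb') + bvNorm a b (backward T m f - fb) := by
    intro m
    have hBV1 : BoundedVariationOn (backward T m f - fb') (Set.Icc a b) := by
      show BoundedVariationOn (fun t => backward T m f t - fb' t) (Set.Icc a b)
      exact bvo_sub (hGdψ m).1 hfb'.1
    have hBV2 : BoundedVariationOn (backward T m f - fb) (Set.Icc a b) := by
      show BoundedVariationOn (fun t => backward T m f t - fb t) (Set.Icc a b)
      exact bvo_sub (hGdψ m).1 hfbBV
    have e1 := sup_le_bvNorm hBV1 ht hab'
    have e2 := sup_le_bvNorm hBV2 ht hab'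
    have e1' : |backward T m f t - fb' t| ≤ bvNorm a b (backward T m f - fb') := e1
    have e2' : |backward T m f t - fb t| ≤ bvNorm a b (backward T m f - fb) := e2
    have h3 : |fb' t - fb t| ≤
        |backward T m f t - fb' t| + |backward T m f t - fb t| := by
      rw [abs_sub_le_iff]
      constructor <;>
        linarith [le_abs_self (backward T m f t - fb' t),
          neg_abs_le (backward T m f t - fb' t),
          le_abs_self (backward T m f t - fb t),
          neg_abs_le (backward T m f t - fb t)]
    linarith
  have hsum : Tendsto (fun m => bvNorm a b (backward T m f - fb') +
      bvNorm a b (backward T m f - fb)) atTop (nhds 0) := by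
    have := h1.add h2
    simpa using this
  have hle : |fb' t - fb t| ≤ 0 :=
    ge_of_tendsto hsum (Filter.Eventually.of_forall hkey)
  have : fb' t - fb t = 0 := abs_eq_zero.mp (le_antisymm hle (abs_nonneg _))
  exact sub_eq_zero.mp this
end
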